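/- arXiv:1510.07001 — 3 statements merged into one kernel-verified Lean document; each statement's English description precedes it below -/
import Mathlib

section
/- In the finite dynamic game model, the common-information-based (CIB) signaling-free beliefs factor across agents and update recursively: for every time t, Π̂_{t+1} = ∏_{n=1}^N Π̂^n_{t+1}, where Π̂^n_{t+1} = ψ̂^n_t(Y^n_t, A_t, Π̂^n_t) and ψ̂^n_t(y, a, π̂)(x') := [Σ_{x∈𝒳^n_t} p^n_t(x'; x, a) q^n_t(y; x, a) π̂(x)] / [Σ_{x∈𝒳^n_t} q^n_t(y; x, a) π̂(x)] whenever the denominator is positive. -/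
open Finset

noncomputable section

namespace SFBelief

/-- Joint open-loop law of the states `X_{1:t+1}` and observations `Y_{1:t}` of the `N`
subsystems when the actions are exogenously fixed to the sequence `a` (open loop).
Mutual independence of the primitive random variables is encoded by the product form. -/
def J (N : ℕ) (X Y A : ℕ → Fin N → Type)
    (init : ∀ n, X 0 n → ℝ)
    (p : ∀ (s : ℕ) (n : Fin N), X (s+1) n → X s n → (∀ m, A s m) → ℝ)
    (q : ∀ (s : ℕ) (n : Fin N), Y s n → X s n → (∀ m, A s m) → ℝ)
    (a : ∀ s : ℕ, ∀ m, A s m) (t : ℕ)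
    (x : ∀ s : Fin (t+1), ∀ n, X s.1 n) (y : ∀ s : Fin t, ∀ n, Y s.1 n) : ℝ :=
  (∏ n, init n (x ⟨0, Nat.succ_pos t⟩ n)) *
    ∏ s : Fin t, ∏ n,
      (p s.1 n (x ⟨s.1 + 1, Nat.succ_lt_succ s.isLt⟩ n)
          (x ⟨s.1, Nat.lt_succ_of_lt s.isLt⟩ n) (a s.1) *
        q s.1 n (y s n) (x ⟨s.1, Nat.lt_succ_of_lt s.isLt⟩ n) (a s.1))

/-- Unnormalized probability `P(X_{t+1} = xt, Y_{1:t} = y)` under the open-loop law. -/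
def PBel (N : ℕ) (X Y A : ℕ → Fin N → Type)
    [∀ t n, Fintype (X t n)] [∀ t n, DecidableEq (X t n)]
    (init : ∀ n, X 0 n → ℝ)
    (p : ∀ (s : ℕ) (n : Fin N), X (s+1) n → X s n → (∀ m, A s m) → ℝ)
    (q : ∀ (s : ℕ) (n : Fin N), Y s n → X s n → (∀ m, A s m) → ℝ)
    (a : ∀ s : ℕ, ∀ m, A s m) (t : ℕ)
    (y : ∀ s : Fin t, ∀ n, Y s.1 n) (xt : ∀ n, X t n) : ℝ :=
  ∑ x : ∀ s : Fin (t+1), ∀ n, X s.1 n,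
    if x (Fin.last t) = xt then J N X Y A init p q a t x y else 0

/-- The `n`-marginal of the common information based signaling-free belief
`γ̂_t(h^c_t) = P(X_t ∈ · | Y_{1:t-1} = y)` (actions fixed open loop). -/
def margSF (N : ℕ) (X Y A : ℕ → Fin N → Type)
    [∀ t n, Fintype (X t n)] [∀ t n, DecidableEq (X t n)]
    (init : ∀ n, X 0 n → ℝ)
    (p : ∀ (s : ℕ) (n : Fin N), X (s+1) n → X s n → (∀ m, A s m) → ℝ)
    (q : ∀ (s : ℕ) (n : Fin N), Y s n → X s n → (∀ m, A s m) → ℝ)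
    (a : ∀ s : ℕ, ∀ m, A s m) (t : ℕ)
    (y : ∀ s : Fin t, ∀ n, Y s.1 n) (n : Fin N) (ξ : X t n) : ℝ :=
  (∑ xt : ∀ m, X t m, if xt n = ξ then PBel N X Y A init p q a t y xt else 0) /
    (∑ xt : ∀ m, X t m, PBel N X Y A init p q a t y xt)

section Aux

variable {N : ℕ} {X Y A : ℕ → Fin N → Type}
    [∀ t n, Fintype (X t n)] [∀ t n, DecidableEq (X t n)]
    (init : ∀ n, X 0 n → ℝ)
    (p : ∀ (s : ℕ) (n : Fin N), X (s+1) n → X s n → (∀ m, A s m) → ℝ)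
    (q : ∀ (s : ℕ) (n : Fin N), Y s n → X s n → (∀ m, A s m) → ℝ)
    (a : ∀ s : ℕ, ∀ m, A s m)

/-- per-agent path weight (without the endpoint indicator) -/
def B (t : ℕ) (y : ∀ s : Fin t, ∀ n, Y s.1 n) (n : Fin N)
    (path : ∀ s : Fin (t+1), X s.1 n) : ℝ :=
  init n (path ⟨0, Nat.succ_pos t⟩) *
    ∏ s : Fin t,
      (p s.1 n (path s.succ) (path s.castSucc) (a s.1) *
        q s.1 n (y s n) (path s.castSucc) (a s.1))

/-- per-agent unnormalized belief -/
def G (t : ℕ) (y : ∀ s : Fin t, ∀ n, Y s.1 n) (n : Fin N) (ξ : X t n) : ℝ :=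
  ∑ path : ∀ s : Fin (t+1), X s.1 n,
    if path (Fin.last t) = ξ then B init p q a t y n path else 0

lemma PBel_eq_prod (t : ℕ) (y : ∀ s : Fin t, ∀ n, Y s.1 n) (xt : ∀ n, X t n) :
    PBel N X Y A init p q a t y xt = ∏ n, G init p q a t y n (xt n) := by
  have key : ∀ x : ∀ s : Fin (t+1), ∀ n, X s.1 n,
      (if x (Fin.last t) = xt then J N X Y A init p q a t x y else 0) =
      ∏ n, (if x (Fin.last t) n = xt n then B init p q a t y n (fun s => x s n) else 0) := by
    intro x
    by_cases h : x (Fin.last t) = xt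
    · rw [if_pos h,
        Finset.prod_congr rfl fun n _ => if_pos (congrFun h n)]
      unfold J B
      rw [Finset.prod_mul_distrib]
      congr 1
      exact Finset.prod_comm
    · rw [if_neg h]
      obtain ⟨n, hn⟩ := Function.ne_iff.mp h
      have hz : (if x (Fin.last t) n = xt n then B init p q a t y n (fun s => x s n)
          else 0) = 0 := if_neg hn
      exact (Finset.prod_eq_zero (Finset.mem_univ n) hz).symm
  rw [PBel, Finset.sum_congr rfl fun x _ => key x]
  rw [show (∏ n, G init p q a t y n (xt n)) =
      ∑ g : ∀ n, ∀ s : Fin (t+1), X s.1 n,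
        ∏ n, (if g n (Fin.last t) = xt n then B init p q a t y n (g n) else 0) from
    Fintype.prod_sum _]
  exact Fintype.sum_equiv (Equiv.piComm _) _ _ (fun x => rfl)

lemma G_succ (t : ℕ) (y : ∀ s : Fin (t+1), ∀ n, Y s.1 n) (n : Fin N) (ξ' : X (t+1) n) :
    G init p q a (t+1) y n ξ' =
      ∑ ξ : X t n, p t n ξ' ξ (a t) * q t n (y (Fin.last t) n) ξ (a t) *
        G init p q a t (fun s m => y ⟨s.1, Nat.lt_succ_of_lt s.isLt⟩ m) n ξ := by
  -- collapse the RHS into a single sum over length-`t` paths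
  have hR : (∑ ξ : X t n, p t n ξ' ξ (a t) * q t n (y (Fin.last t) n) ξ (a t) *
        G init p q a t (fun s m => y ⟨s.1, Nat.lt_succ_of_lt s.isLt⟩ m) n ξ) =
      ∑ path : ∀ s : Fin (t+1), X s.1 n,
        p t n ξ' (path (Fin.last t)) (a t) * q t n (y (Fin.last t) n) (path (Fin.last t)) (a t) *
          B init p q a t (fun s m => y ⟨s.1, Nat.lt_succ_of_lt s.isLt⟩ m) n path := by
    have : ∀ ξ : X t n, p t n ξ' ξ (a t) * q t n (y (Fin.last t) n) ξ (a t) *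
        G init p q a t (fun s m => y ⟨s.1, Nat.lt_succ_of_lt s.isLt⟩ m) n ξ =
        ∑ path : ∀ s : Fin (t+1), X s.1 n,
          if path (Fin.last t) = ξ then
            p t n ξ' ξ (a t) * q t n (y (Fin.last t) n) ξ (a t) *
              B init p q a t (fun s m => y ⟨s.1, Nat.lt_succ_of_lt s.isLt⟩ m) n path
          else 0 := by
      intro ξ
      rw [G, Finset.mul_sum]
      refine Finset.sum_congr rfl fun path _ => ?_
      rw [mul_ite, mul_zero]
    rw [Finset.sum_congr rfl fun ξ _ => this ξ, Finset.sum_comm]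
    refine Finset.sum_congr rfl fun path _ => ?_
    rw [Finset.sum_ite_eq, if_pos (Finset.mem_univ _)]
  rw [hR, G, ← Equiv.sum_comp (Fin.snocEquiv (fun s : Fin (t+2) => X s.1 n))
      (fun path => if path (Fin.last (t+1)) = ξ' then B init p q a (t+1) y n path else 0),
    Fintype.sum_prod_type, Finset.sum_comm]
  refine Finset.sum_congr rfl fun path _ => ?_
  simp only [Fin.snocEquiv_apply, Fin.snoc_last]
  rw [Finset.sum_ite_eq', if_pos (Finset.mem_univ _)]
  -- now a pointwise identity about `B` applied to a `snoc` path
  unfold B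
  rw [Fin.prod_univ_castSucc]
  have h0 : (Fin.snoc (α := fun i : Fin (t+2) => X i.1 n) path ξ')
      ⟨0, Nat.succ_pos (t+1)⟩ = path ⟨0, Nat.succ_pos t⟩ :=
    Fin.snoc_castSucc (α := fun i : Fin (t+2) => X i.1 n)
      (p := path) (x := ξ') (i := ⟨0, Nat.succ_pos t⟩)
  simp only [Fin.snocEquiv_apply]
  simp only [Fin.succ_castSucc, Fin.succ_last, Fin.snoc_castSucc, Fin.snoc_last,
    Fin.coe_castSucc, Fin.val_last, h0]
  have hycast : ∀ x : Fin t, y x.castSucc n = y ⟨x.1, Nat.lt_succ_of_lt x.isLt⟩ n :=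
    fun _ => rfl
  simp only [hycast]
  ring

lemma G_nonneg (hinit0 : ∀ n x, 0 ≤ init n x)
    (hp0 : ∀ s n x' x a, 0 ≤ p s n x' x a) (hq0 : ∀ s n y x a, 0 ≤ q s n y x a)
    (t : ℕ) (y : ∀ s : Fin t, ∀ n, Y s.1 n) (n : Fin N) (ξ : X t n) :
    0 ≤ G init p q a t y n ξ := by
  refine Finset.sum_nonneg fun path _ => ?_
  split
  · exact mul_nonneg (hinit0 _ _)
      (Finset.prod_nonneg fun s _ => mul_nonneg (hp0 _ _ _ _ _) (hq0 _ _ _ _ _))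
  · exact le_refl 0

lemma margSF_eq (t : ℕ) (y : ∀ s : Fin t, ∀ n, Y s.1 n) (n : Fin N) (ξ : X t n)
    (hS : ∀ m, 0 < ∑ z, G init p q a t y m z) :
    margSF N X Y A init p q a t y n ξ =
      G init p q a t y n ξ / ∑ z, G init p q a t y n z := by
  classical
  set g : ∀ m, X t m → ℝ := fun m z =>
    if h : m = n then (if h ▸ z = ξ then G init p q a t y n ξ else 0)
    else G init p q a t y m z with hg
  have key : ∀ xt : ∀ m, X t m,
      (if xt n = ξ then PBel N X Y A init p q a t y xt else 0) = ∏ m, g m (xt m) := by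
    intro xt
    rw [PBel_eq_prod]
    by_cases hx : xt n = ξ
    · rw [if_pos hx]
      refine Finset.prod_congr rfl fun m _ => ?_
      by_cases hm : m = n
      · subst hm
        simp only [hg]
        rw [dif_pos trivial]
        show G init p q a t y m (xt m) = if xt m = ξ then G init p q a t y m ξ else 0
        rw [if_pos hx, hx]
      · simp only [hg]; rw [dif_neg hm]
    · rw [if_neg hx]
      refine (Finset.prod_eq_zero (Finset.mem_univ n) ?_).symm
      simp only [hg]
      rw [dif_pos trivial]
      exact if_neg hx
  have hsum_n : ∑ z : X t n, g n z = G init p q a t y n ξ := by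
    have h1 : ∀ z : X t n, g n z = if z = ξ then G init p q a t y n ξ else 0 := by
      intro z; simp only [hg]; rw [dif_pos trivial]
    rw [Finset.sum_congr rfl fun z _ => h1 z, Finset.sum_ite_eq', if_pos (Finset.mem_univ _)]
  have hsum_m : ∀ m, m ≠ n → ∑ z : X t m, g m z = ∑ z, G init p q a t y m z := by
    intro m hm
    refine Finset.sum_congr rfl fun z _ => ?_
    simp only [hg]; rw [dif_neg hm]
  have hnum : (∑ xt : ∀ m, X t m, if xt n = ξ then PBel N X Y A init p q a t y xt else 0) =
      G init p q a t y n ξ * ∏ m ∈ Finset.univ.erase n, ∑ z, G init p q a t y m z := by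
    rw [Finset.sum_congr rfl fun xt _ => key xt, ← Fintype.prod_sum g,
      ← Finset.mul_prod_erase Finset.univ _ (Finset.mem_univ n), hsum_n]
    congr 1
    exact Finset.prod_congr rfl fun m hm => hsum_m m (Finset.ne_of_mem_erase hm)
  have hden : (∑ xt : ∀ m, X t m, PBel N X Y A init p q a t y xt) =
      (∑ z, G init p q a t y n z) * ∏ m ∈ Finset.univ.erase n, ∑ z, G init p q a t y m z := by
    rw [Finset.sum_congr rfl fun xt _ => PBel_eq_prod init p q a t y xt, ← Fintype.prod_sum,
      ← Finset.mul_prod_erase Finset.univ _ (Finset.mem_univ n)]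
  have hP : (∏ m ∈ Finset.univ.erase n, ∑ z, G init p q a t y m z) ≠ 0 :=
    ne_of_gt (Finset.prod_pos fun m _ => hS m)
  rw [margSF, hnum, hden, mul_div_mul_right _ _ hP]


lemma div_div_div_same {a b c : ℝ} (hc : c ≠ 0) : a / c / (b / c) = a / b := by
  rw [div_div_div_eq, mul_comm a c, mul_div_mul_left _ _ hc]

end Aux

/-- in the finite dynamic game model, the CIB signaling-free beliefs factor
across agents and update recursively:
`Π̂_{t+1} = ∏_n ψ̂ⁿ_t(Yⁿ_t, A_t, Π̂ⁿ_t)`, where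
`ψ̂ⁿ_t(y,a,π̂)(x') = (∑_x pⁿ_t(x';x,a) qⁿ_t(y;x,a) π̂(x)) / (∑_x qⁿ_t(y;x,a) π̂(x))`. -/
theorem stmt_0 (N : ℕ) (X Y A : ℕ → Fin N → Type)
    [∀ t n, Fintype (X t n)] [∀ t n, DecidableEq (X t n)]
    [∀ t n, Fintype (Y t n)] [∀ t n, Fintype (A t n)]
    (init : ∀ n, X 0 n → ℝ)
    (hinit0 : ∀ n x, 0 ≤ init n x) (hinit1 : ∀ n, ∑ x, init n x = 1)
    (p : ∀ (s : ℕ) (n : Fin N), X (s+1) n → X s n → (∀ m, A s m) → ℝ)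
    (hp0 : ∀ s n x' x a, 0 ≤ p s n x' x a) (hp1 : ∀ s n x a, ∑ x', p s n x' x a = 1)
    (q : ∀ (s : ℕ) (n : Fin N), Y s n → X s n → (∀ m, A s m) → ℝ)
    (hq0 : ∀ s n y x a, 0 ≤ q s n y x a) (hq1 : ∀ s n x a, ∑ y, q s n y x a = 1)
    (a : ∀ s : ℕ, ∀ m, A s m)
    (t : ℕ) (y : ∀ s : Fin (t+1), ∀ n, Y s.1 n)
    (hy : 0 < ∑ xt : ∀ m, X (t+1) m, PBel N X Y A init p q a (t+1) y xt) :
    ∀ x' : ∀ n, X (t+1) n,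
      PBel N X Y A init p q a (t+1) y x' /
          (∑ xt : ∀ m, X (t+1) m, PBel N X Y A init p q a (t+1) y xt) =
        ∏ n,
          (∑ ξ : X t n, p t n (x' n) ξ (a t) * q t n (y (Fin.last t) n) ξ (a t) *
              margSF N X Y A init p q a t
                (fun s m => y ⟨s.1, Nat.lt_succ_of_lt s.isLt⟩ m) n ξ) /
            (∑ ξ : X t n, q t n (y (Fin.last t) n) ξ (a t) *
              margSF N X Y A init p q a t
                (fun s m => y ⟨s.1, Nat.lt_succ_of_lt s.isLt⟩ m) n ξ) := by
  intro x'
  set y' : ∀ s : Fin t, ∀ m, Y s.1 m :=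
    fun s m => y ⟨s.1, Nat.lt_succ_of_lt s.isLt⟩ m with hy'
  have hGnn : ∀ (t' : ℕ) (yy : ∀ s : Fin t', ∀ n, Y s.1 n) (n : Fin N) (ξ : X t' n),
      0 ≤ G init p q a t' yy n ξ :=
    fun t' yy n ξ => G_nonneg init p q a hinit0 hp0 hq0 t' yy n ξ
  have hGsum : ∀ n, (∑ ξ' : X (t+1) n, G init p q a (t+1) y n ξ') =
      ∑ ξ : X t n, q t n (y (Fin.last t) n) ξ (a t) * G init p q a t y' n ξ := by
    intro n
    rw [Finset.sum_congr rfl fun ξ' _ => G_succ init p q a t y n ξ', Finset.sum_comm]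
    refine Finset.sum_congr rfl fun ξ _ => ?_
    simp_rw [mul_assoc]
    rw [← Finset.sum_mul, hp1, one_mul]
  have hden : (∑ xt : ∀ m, X (t+1) m, PBel N X Y A init p q a (t+1) y xt) =
      ∏ n, ∑ ξ : X t n, q t n (y (Fin.last t) n) ξ (a t) * G init p q a t y' n ξ := by
    rw [Finset.sum_congr rfl fun xt _ => PBel_eq_prod init p q a (t+1) y xt,
      ← Fintype.prod_sum]
    exact Finset.prod_congr rfl fun n _ => hGsum n
  have hDnn : ∀ n, 0 ≤ ∑ ξ : X t n, q t n (y (Fin.last t) n) ξ (a t) *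
      G init p q a t y' n ξ :=
    fun n => Finset.sum_nonneg fun ξ _ => mul_nonneg (hq0 _ _ _ _ _) (hGnn _ _ _ _)
  have hDpos : ∀ n, 0 < ∑ ξ : X t n, q t n (y (Fin.last t) n) ξ (a t) *
      G init p q a t y' n ξ := by
    intro n
    rcases (hDnn n).lt_or_eq with h | h
    · exact h
    · exfalso
      rw [hden, Finset.prod_eq_zero (Finset.mem_univ n) h.symm] at hy
      exact lt_irrefl 0 hy
  have hSpos : ∀ n, 0 < ∑ ξ, G init p q a t y' n ξ := by
    intro n
    refine lt_of_lt_of_le (hDpos n) (Finset.sum_le_sum fun ξ _ => ?_)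
    have hqle : q t n (y (Fin.last t) n) ξ (a t) ≤ 1 := by
      rw [← hq1 t n ξ (a t)]
      exact Finset.single_le_sum (fun yv _ => hq0 t n yv ξ (a t)) (Finset.mem_univ _)
    exact mul_le_of_le_one_left (hGnn _ _ _ _) hqle
  have hmarg : ∀ (n : Fin N) (ξ : X t n), margSF N X Y A init p q a t y' n ξ =
      G init p q a t y' n ξ / ∑ z, G init p q a t y' n z :=
    fun n ξ => margSF_eq init p q a t y' n ξ hSpos
  rw [PBel_eq_prod init p q a (t+1) y x', hden, ← Finset.prod_div_distrib]
  refine Finset.prod_congr rfl fun n _ => ?_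
  have hnum : (∑ ξ : X t n, p t n (x' n) ξ (a t) * q t n (y (Fin.last t) n) ξ (a t) *
        margSF N X Y A init p q a t y' n ξ) =
      (∑ ξ : X t n, p t n (x' n) ξ (a t) * q t n (y (Fin.last t) n) ξ (a t) *
        G init p q a t y' n ξ) / ∑ z, G init p q a t y' n z := by
    simp_rw [hmarg n, ← mul_div_assoc]
    rw [← Finset.sum_div]
  have hd : (∑ ξ : X t n, q t n (y (Fin.last t) n) ξ (a t) *
        margSF N X Y A init p q a t y' n ξ) =
      (∑ ξ : X t n, q t n (y (Fin.last t) n) ξ (a t) *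
        G init p q a t y' n ξ) / ∑ z, G init p q a t y' n z := by
    simp_rw [hmarg n, ← mul_div_assoc]
    rw [← Finset.sum_div]
  rw [hnum, hd, div_div_div_same (ne_of_gt (hSpos n)), G_succ init p q a t y n (x' n)]
end SFBelief
end
end

section
/- If λ is a CIB strategy profile and ψ is a CIB update rule consistent with λ, then there exists a pair (g, μ) = f(λ, ψ), where g is the behavioral strategy profile defined by g^n_t(h^n_t) := λ^n_t(x^n_t, (c_t, γ_{ψ,t}(h^c_t), γ̂_t(h^c_t))) and μ is a belief system consistent with g, such that for all histories h^n_t and all state trajectories x_{1:t}: μ^n_t(h^n_t)(x_{1:t}) = 1{x^n_{1:t} equals the private trajectory in h^n_t} · ∏_{k≠n} μ^c_t(h^c_t)(x^k_{1:t}), for some common-history maps μ^c_t: H^c_t → Δ(𝒳_{1:t}) whose time-t marginals satisfy Σ_{x^{-k}_{1:t}, x^k_{1:t-1}} μ^c_t(h^c_t)(x_{1:t}) = γ_{ψ,t}(h^c_t)(x^k_t) for every agent k and every x^k_t. -/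
open Finset

noncomputable section

namespace CIBGame

/-- A finite stochastic dynamic game with asymmetric information.  `N` agents act over
times `t = 0,…,T-1`.  `C` is the public state space, `X n`, `A n`, `Y n` are agent `n`'s
local state, action and observation spaces.  `rhoC`, `rhoX` are the (mutually
independent) initial distributions; `pC`, `p`, `q` are the transition and observation
kernels induced by the dynamics `C_{t+1}=f^c_t(C_t,A_t,W^C_t)`,
`Xⁿ_{t+1}=fⁿ_t(Xⁿ_t,A_t,Wⁿ_t)`, `Yⁿ_t=hⁿ_t(Xⁿ_t,A_t,Vⁿ_t)` with mutually independent
noises; `util t n` is agent `n`'s instantaneous utility `φⁿ_t`. -/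
structure Model where
  N : ℕ
  T : ℕ
  C : Type
  X : Fin N → Type
  A : Fin N → Type
  Y : Fin N → Type
  finC : Fintype C
  deqC : DecidableEq C
  finX : ∀ n, Fintype (X n)
  deqX : ∀ n, DecidableEq (X n)
  finA : ∀ n, Fintype (A n)
  deqA : ∀ n, DecidableEq (A n)
  finY : ∀ n, Fintype (Y n)
  deqY : ∀ n, DecidableEq (Y n)
  rhoC : C → ℝ
  rhoX : ∀ n, X n → ℝ
  pC : ℕ → C → C → (∀ m, A m) → ℝ
  p : ℕ → ∀ n, X n → X n → (∀ m, A m) → ℝ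
  q : ℕ → ∀ n, Y n → X n → (∀ m, A m) → ℝ
  util : ℕ → Fin N → C → (∀ m, X m) → (∀ m, A m) → ℝ

attribute [instance] Model.finC Model.deqC Model.finX Model.deqX Model.finA Model.deqA
  Model.finY Model.deqY

abbrev JointX (M : Model) : Type := ∀ n, M.X n
abbrev JointA (M : Model) : Type := ∀ n, M.A n
abbrev JointY (M : Model) : Type := ∀ n, M.Y n

/-- The kernels of the model are genuine probability kernels. -/
def Model.Valid (M : Model) : Prop :=
  (∀ c, 0 ≤ M.rhoC c) ∧ (∑ c, M.rhoC c = 1) ∧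
  (∀ n x, 0 ≤ M.rhoX n x) ∧ (∀ n, ∑ x, M.rhoX n x = 1) ∧
  (∀ t c' c a, 0 ≤ M.pC t c' c a) ∧ (∀ t c a, ∑ c', M.pC t c' c a = 1) ∧
  (∀ t n x' x a, 0 ≤ M.p t n x' x a) ∧ (∀ t n x a, ∑ x', M.p t n x' x a = 1) ∧
  (∀ t n y x a, 0 ≤ M.q t n y x a) ∧ (∀ t n x a, ∑ y, M.q t n y x a = 1)

/-- Common history `h^c_t = (c_{0:t}, a_{0:t-1}, y_{0:t-1})`. -/
abbrev CommonHist (M : Model) (t : ℕ) : Type :=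
  (Fin (t+1) → M.C) × (Fin t → JointA M) × (Fin t → JointY M)

/-- Agent `n`'s private history `hⁿ_t = (xⁿ_{0:t}, h^c_t)`. -/
abbrev PrivHist (M : Model) (n : Fin M.N) (t : ℕ) : Type :=
  (Fin (t+1) → M.X n) × CommonHist M t

/-- A trajectory `x_{0:t}` of the joint local states. -/
abbrev StateTraj (M : Model) (t : ℕ) : Type := Fin (t+1) → JointX M

/-- A full system trajectory `(c_{0:t}, x_{0:t}, a_{0:t-1}, y_{0:t-1})`. -/
abbrev FullTraj (M : Model) (t : ℕ) : Type :=
  (Fin (t+1) → M.C) × StateTraj M t × (Fin t → JointA M) × (Fin t → JointY M)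

/-- A behavioral strategy profile: `g n t` maps agent `n`'s private history at `t` to a
(sub)distribution over his actions. -/
abbrev Strat (M : Model) : Type := ∀ n : Fin M.N, ∀ t : ℕ, PrivHist M n t → M.A n → ℝ

/-- A belief system: `μ n t` maps agent `n`'s private history at `t` to a distribution
over state trajectories `x_{0:t}`. -/
abbrev BeliefSys (M : Model) : Type :=
  ∀ n : Fin M.N, ∀ t : ℕ, PrivHist M n t → StateTraj M t → ℝ

def IsStrat (M : Model) (g : Strat M) : Prop :=
  ∀ n t h, (∀ a, 0 ≤ g n t h a) ∧ (∑ a, g n t h a) = 1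

def IsBelief (M : Model) (μ : BeliefSys M) : Prop :=
  ∀ n t h, (∀ ξ, 0 ≤ μ n t h ξ) ∧ (∑ ξ, μ n t h ξ) = 1

def commonOf (M : Model) {t : ℕ} (f : FullTraj M t) : CommonHist M t :=
  (f.1, f.2.2.1, f.2.2.2)

def currPriv (M : Model) {t : ℕ} (f : FullTraj M t) (n : Fin M.N) : PrivHist M n t :=
  (fun s => f.2.1 s n, commonOf M f)

/-- Agent `n`'s private history at the intermediate time `s < t` along a trajectory. -/
def histAt (M : Model) {t : ℕ} (f : FullTraj M t) (s : Fin t) (n : Fin M.N) :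
    PrivHist M n s.1 :=
  (fun r => f.2.1 ⟨r.1, by have h1 := r.isLt; have h2 := s.isLt; omega⟩ n,
   (fun r => f.1 ⟨r.1, by have h1 := r.isLt; have h2 := s.isLt; omega⟩,
    fun r => f.2.2.1 ⟨r.1, by have h1 := r.isLt; have h2 := s.isLt; omega⟩,
    fun r => f.2.2.2 ⟨r.1, by have h1 := r.isLt; have h2 := s.isLt; omega⟩))

/-- Probability of a full trajectory under the behavioral strategy profile `g`. -/
def trajProb (M : Model) (g : Strat M) (t : ℕ) (f : FullTraj M t) : ℝ :=
  M.rhoC (f.1 ⟨0, Nat.succ_pos t⟩) * (∏ n, M.rhoX n (f.2.1 ⟨0, Nat.succ_pos t⟩ n)) *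
    ∏ s : Fin t,
      ((∏ n, g n s.1 (histAt M f s n) (f.2.2.1 s n)) *
        M.pC s.1 (f.1 ⟨s.1 + 1, by have h2 := s.isLt; omega⟩)
          (f.1 ⟨s.1, by have h2 := s.isLt; omega⟩) (f.2.2.1 s) *
        (∏ n, M.p s.1 n (f.2.1 ⟨s.1 + 1, by have h2 := s.isLt; omega⟩ n)
          (f.2.1 ⟨s.1, by have h2 := s.isLt; omega⟩ n) (f.2.2.1 s)) *
        (∏ n, M.q s.1 n (f.2.2.2 s n)
          (f.2.1 ⟨s.1, by have h2 := s.isLt; omega⟩ n) (f.2.2.1 s)))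

/-- `P^g(hⁿ_t)`: probability of agent `n`'s private history under `g`. -/
def privHistProb (M : Model) (g : Strat M) (n : Fin M.N) (t : ℕ) (h : PrivHist M n t) : ℝ :=
  ∑ f : FullTraj M t, if currPriv M f n = h then trajProb M g t f else 0

/-- `P^g(X_{0:t} = ξ | hⁿ_t)`: conditional distribution of the state trajectory given
agent `n`'s private history, under `g`. -/
def condStateProb (M : Model) (g : Strat M) (n : Fin M.N) (t : ℕ) (h : PrivHist M n t)
    (ξ : StateTraj M t) : ℝ :=
  (∑ f : FullTraj M t, if currPriv M f n = h ∧ f.2.1 = ξ then trajProb M g t f else 0) /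
    privHistProb M g n t h

/-- Unnormalized signaling-free weight of a state trajectory: the open-loop probability
of `(x_{0:t}, y_{0:t-1})` with the actions exogenously fixed to those in the history. -/
def sfWeight (M : Model) (t : ℕ) (a : Fin t → JointA M) (y : Fin t → JointY M)
    (ξ : StateTraj M t) : ℝ :=
  (∏ k, M.rhoX k (ξ ⟨0, Nat.succ_pos t⟩ k)) *
    ∏ s : Fin t, ∏ k,
      (M.p s.1 k (ξ ⟨s.1 + 1, by have h2 := s.isLt; omega⟩ k)
          (ξ ⟨s.1, by have h2 := s.isLt; omega⟩ k) (a s) *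
        M.q s.1 k (y s k) (ξ ⟨s.1, by have h2 := s.isLt; omega⟩ k) (a s))

/-- Unnormalized signaling-free belief `μ̂ⁿ_t(hⁿ_t)` of agent `n` (weight of a state
trajectory compatible with his own observed local states). -/
def sfPrivUn (M : Model) (n : Fin M.N) (t : ℕ) (h : PrivHist M n t) (ξ : StateTraj M t) : ℝ :=
  if (fun s => ξ s n) = h.1 then sfWeight M t h.2.2.1 h.2.2.2 ξ else 0

/-- The CIB signaling-free belief `γ̂_t(h^c_t)(x_t) = P(X_t = x_t | Y_{0:t-1})`, with the
actions fixed open loop. -/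
def sfCIB (M : Model) (t : ℕ) (h : CommonHist M t) (x : JointX M) : ℝ :=
  (∑ ξ : StateTraj M t, if ξ (Fin.last t) = x then sfWeight M t h.2.1 h.2.2 ξ else 0) /
    (∑ ξ : StateTraj M t, sfWeight M t h.2.1 h.2.2 ξ)

def mkPriv (M : Model) {t : ℕ} (hc : CommonHist M t) (ξ : StateTraj M t) (k : Fin M.N) :
    PrivHist M k t :=
  (fun s => ξ s k, hc)

/-- The one-step joint measure `P^{g_t}_μ(x_{0:t}, x_{t+1}, y_t, a_t | hⁿ_t, aⁿ_t)` of
eq. (11): belief times transition, observation and the other agents' strategies. -/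
def oneStep (M : Model) (g : Strat M) (μ : BeliefSys M) (n : Fin M.N) (t : ℕ)
    (h : PrivHist M n t) (ξ : StateTraj M t) (x' : JointX M) (y : JointY M)
    (a : JointA M) : ℝ :=
  μ n t h ξ * (∏ k, M.p t k (x' k) (ξ (Fin.last t) k) a) *
    (∏ k, M.q t k (y k) (ξ (Fin.last t) k) a) *
    ∏ k ∈ Finset.univ.erase n, g k t (mkPriv M h.2 ξ k) (a k)

/-- Extension of a private history by one period. -/
def extendPriv (M : Model) {n : Fin M.N} {t : ℕ} (h : PrivHist M n t) (x' : M.X n)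
    (c' : M.C) (a : JointA M) (y : JointY M) : PrivHist M n (t+1) :=
  (Fin.snoc h.1 x', (Fin.snoc h.2.1 c', Fin.snoc h.2.2.1 a, Fin.snoc h.2.2.2 y))

/-- `P^{g_t}_μ(xⁿ_{t+1}, y_t, a_t | hⁿ_t, aⁿ_t)`: the normalizer in Bayes' rule. -/
def newStateProb (M : Model) (g : Strat M) (μ : BeliefSys M) (n : Fin M.N) (t : ℕ)
    (h : PrivHist M n t) (x' : M.X n) (y : JointY M) (a : JointA M) : ℝ :=
  ∑ ξ : StateTraj M t, ∑ z : JointX M,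
    if z n = x' then oneStep M g μ n t h ξ z y a else 0

/-- Consistency of a belief system with a strategy profile: beliefs are probability
distributions, the time-`0` beliefs are the (product) prior conditioned on the agent's
own local state, updates follow Bayes' rule whenever possible, and otherwise assign zero
mass to every trajectory outside the support of the signaling-free belief. -/
def Consistent (M : Model) (g : Strat M) (μ : BeliefSys M) : Prop :=
  IsBelief M μ ∧
  (∀ n (h : PrivHist M n 0) (ξ : StateTraj M 0),
    μ n 0 h ξ = (if (fun s => ξ s n) = h.1 then (1:ℝ) else 0) *
      ∏ k ∈ Finset.univ.erase n, M.rhoX k (ξ (Fin.last 0) k)) ∧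
  (∀ n t (h : PrivHist M n t) (x' : M.X n) (c' : M.C) (a : JointA M) (y : JointY M),
    (0 < newStateProb M g μ n t h x' y a →
      ∀ ζ : StateTraj M (t+1),
        μ n (t+1) (extendPriv M h x' c' a y) ζ =
          (if ζ (Fin.last (t+1)) n = x' then (1:ℝ) else 0) *
            (oneStep M g μ n t h (fun s => ζ ⟨s.1, by have h2 := s.isLt; omega⟩)
                (ζ (Fin.last (t+1))) y a /
              newStateProb M g μ n t h x' y a)) ∧
    (newStateProb M g μ n t h x' y a = 0 →
      ∀ ζ : StateTraj M (t+1),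
        (0 < ∑ ζ' : StateTraj M (t+1), sfPrivUn M n (t+1) (extendPriv M h x' c' a y) ζ') →
        sfPrivUn M n (t+1) (extendPriv M h x' c' a y) ζ = 0 →
        μ n (t+1) (extendPriv M h x' c' a y) ζ = 0))

def extendFull (M : Model) {t : ℕ} (f : FullTraj M t) (a : JointA M) (y : JointY M)
    (c' : M.C) (x' : JointX M) : FullTraj M (t+1) :=
  (Fin.snoc f.1 c', Fin.snoc f.2.1 x', Fin.snoc f.2.2.1 a, Fin.snoc f.2.2.2 y)

/-- Expected continuation utility of agent `n` over the next `k` periods, starting from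
the full system history `f` at time `t`, under the strategy profile `g`. -/
def contUtil (M : Model) (g : Strat M) (n : Fin M.N) : ℕ → (t : ℕ) → FullTraj M t → ℝ
  | 0, _, _ => 0
  | k+1, t, f =>
    ∑ a : JointA M,
      (∏ m, g m t (currPriv M f m) (a m)) *
        (M.util t n (f.1 (Fin.last t)) (f.2.1 (Fin.last t)) a +
          ∑ c' : M.C, ∑ x' : JointX M, ∑ y : JointY M,
            M.pC t c' (f.1 (Fin.last t)) a *
              (∏ m, M.p t m (x' m) (f.2.1 (Fin.last t) m) a) *
              (∏ m, M.q t m (y m) (f.2.1 (Fin.last t) m) a) *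
              contUtil M g n k (t+1) (extendFull M f a y c' x'))

/-- `E^g_μ[∑_{τ=t}^{T-1} φⁿ_τ(C_τ,X_τ,A_τ) | hⁿ_t]`: agent `n`'s expected continuation
utility at his private history `h`, under the belief system `μ` and profile `g`. -/
def expContUtil (M : Model) (g : Strat M) (μ : BeliefSys M) (n : Fin M.N) (t : ℕ)
    (h : PrivHist M n t) : ℝ :=
  ∑ ξ : StateTraj M t, μ n t h ξ * contUtil M g n (M.T - t) t (h.2.1, ξ, h.2.2.1, h.2.2.2)

/-- Sequential rationality: no agent has a profitable unilateral deviation at any of his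
private histories, where utilities are evaluated with the belief system `μ`. -/
def SeqRational (M : Model) (g : Strat M) (μ : BeliefSys M) : Prop :=
  ∀ n t (h : PrivHist M n t) (g' : Strat M), IsStrat M g' → (∀ m, m ≠ n → g' m = g m) →
    expContUtil M g' μ n t h ≤ expContUtil M g μ n t h

/-- Perfect Bayesian equilibrium: a sequentially rational and consistent pair. -/
def IsPBE (M : Model) (g : Strat M) (μ : BeliefSys M) : Prop :=
  IsStrat M g ∧ SeqRational M g μ ∧ Consistent M g μ

/-- A belief on the joint local states. -/
abbrev Bel (M : Model) : Type := JointX M → ℝ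

/-- `𝓑_t = 𝒞 × Δ(𝒳) × Δ(𝒳)`: public state, CIB belief, CIB signaling-free belief. -/
abbrev BSpace (M : Model) : Type := M.C × Bel M × Bel M

/-- A CIB strategy profile `λⁿ_t : 𝒳ⁿ × 𝓑_t → Δ(𝒜ⁿ)`. -/
abbrev CIBStrat (M : Model) : Type := ∀ n : Fin M.N, ℕ → M.X n → BSpace M → M.A n → ℝ

/-- A CIB update rule `ψⁿ_t : 𝒴ⁿ × 𝒜 × 𝓑_t → Δ(𝒳ⁿ)`. -/
abbrev CIBUpdate (M : Model) : Type :=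
  ∀ n : Fin M.N, ℕ → M.Y n → JointA M → BSpace M → M.X n → ℝ

/-- The `n`-marginal of a joint belief. -/
def marg (M : Model) (π : Bel M) (n : Fin M.N) (x : M.X n) : ℝ :=
  ∑ ξ : JointX M, if ξ n = x then π ξ else 0

/-- The signaling-free update `ψ̂ⁿ_t(y, a, π̂)`. -/
def sfUpdate (M : Model) (t : ℕ) (n : Fin M.N) (y : M.Y n) (a : JointA M) (piH : Bel M)
    (x' : M.X n) : ℝ :=
  (∑ x : M.X n, M.p t n x' x a * M.q t n y x a * marg M piH n x) /
    (∑ x : M.X n, M.q t n y x a * marg M piH n x)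

def IsCIBStrat (M : Model) (lam : CIBStrat M) : Prop :=
  ∀ n t x b, (∀ a, 0 ≤ lam n t x b a) ∧ (∑ a, lam n t x b a) = 1

def IsCIBUpdate (M : Model) (ψ : CIBUpdate M) : Prop :=
  ∀ n t y a b, (∀ x', 0 ≤ ψ n t y a b x') ∧ (∑ x', ψ n t y a b x') = 1

/-- Consistency of a CIB update rule `ψ` with a CIB strategy profile `λ` (Definition 5):
Bayes' rule with likelihood weight `qⁿ_t(yⁿ;x,a)·λⁿ_t(x,b)(aⁿ)` whenever the normalizer
is positive, and otherwise zero mass wherever the signaling-free update vanishes. -/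
def UpdateConsistent (M : Model) (ψ : CIBUpdate M) (lam : CIBStrat M) : Prop :=
  ∀ n t (y : M.Y n) (a : JointA M) (b : BSpace M),
    (0 < (∑ x : M.X n, M.q t n y x a * lam n t x b (a n) * marg M b.2.1 n x) →
      ∀ x', ψ n t y a b x' =
        (∑ x : M.X n,
            M.p t n x' x a * (M.q t n y x a * lam n t x b (a n)) * marg M b.2.1 n x) /
          (∑ x : M.X n, M.q t n y x a * lam n t x b (a n) * marg M b.2.1 n x)) ∧
    ((∑ x : M.X n, M.q t n y x a * lam n t x b (a n) * marg M b.2.1 n x) = 0 →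
      ∀ x', 0 < (∑ x : M.X n, M.q t n y x a * marg M b.2.2 n x) →
        (∑ x : M.X n, M.p t n x' x a * M.q t n y x a * marg M b.2.2 n x) = 0 →
        ψ n t y a b x' = 0)

def restrictC (M : Model) {t : ℕ} (h : CommonHist M (t+1)) : CommonHist M t :=
  (fun s => h.1 ⟨s.1, by have h2 := s.isLt; omega⟩,
   fun s => h.2.1 ⟨s.1, by have h2 := s.isLt; omega⟩,
   fun s => h.2.2 ⟨s.1, by have h2 := s.isLt; omega⟩)

/-- The CIB belief system `γ_ψ` induced recursively by a CIB update rule `ψ`. -/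
def gammaPsi (M : Model) (ψ : CIBUpdate M) : (t : ℕ) → CommonHist M t → JointX M → ℝ
  | 0, _, ξ => ∏ k, M.rhoX k (ξ k)
  | t+1, h, ξ =>
    ∏ k, ψ k t (h.2.2 (Fin.last t) k) (h.2.1 (Fin.last t))
      (h.1 ⟨t, by omega⟩, gammaPsi M ψ t (restrictC M h), sfCIB M t (restrictC M h)) (ξ k)

/-- The behavioral strategy profile induced by a CIB strategy profile and a CIB update
rule: `gⁿ_t(hⁿ_t) = λⁿ_t(xⁿ_t, (c_t, γ_{ψ,t}(h^c_t), γ̂_t(h^c_t)))`. -/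
def stratOf (M : Model) (lam : CIBStrat M) (ψ : CIBUpdate M) : Strat M :=
  fun n t h a =>
    lam n t (h.1 (Fin.last t))
      (h.2.1 (Fin.last t), gammaPsi M ψ t h.2, sfCIB M t h.2) a

/-- `k`-marginal of a distribution over state trajectories. -/
def margTraj (M : Model) {t : ℕ} (ν : StateTraj M t → ℝ) (k : Fin M.N)
    (xk : Fin (t+1) → M.X k) : ℝ :=
  ∑ ξ : StateTraj M t, if (fun s => ξ s k) = xk then ν ξ else 0

/-- The product form of the belief system of Lemma 2:
`μⁿ_t(hⁿ_t)(x_{0:t}) = 1{xⁿ_{0:t} matches hⁿ_t} ∏_{k≠n} μ^c_t(h^c_t)(x^k_{0:t})`. -/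
def ProductForm (M : Model) (μ : BeliefSys M)
    (μc : ∀ t : ℕ, CommonHist M t → StateTraj M t → ℝ) : Prop :=
  ∀ n t (h : PrivHist M n t) (ξ : StateTraj M t),
    μ n t h ξ = (if (fun s => ξ s n) = h.1 then (1:ℝ) else 0) *
      ∏ k ∈ Finset.univ.erase n, margTraj M (μc t h.2) k (fun s => ξ s k)

/-- The time-`t` marginal of `μ^c_t` agrees with the CIB belief `γ_{ψ,t}` (eq. (29)). -/
def MarginalMatch (M : Model) (ψ : CIBUpdate M)
    (μc : ∀ t : ℕ, CommonHist M t → StateTraj M t → ℝ) : Prop :=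
  ∀ t (h : CommonHist M t) (k : Fin M.N) (xk : M.X k),
    (∑ ξ : StateTraj M t, if ξ (Fin.last t) k = xk then μc t h ξ else 0) =
      marg M (gammaPsi M ψ t h) k xk

/-- The joint next-period CIB belief `ψ_t(y_t, a_t, b_t) = ∏_k ψᵏ_t(yᵏ_t, a_t, b_t)`. -/
def jointPsiNext (M : Model) (ψ : CIBUpdate M) (t : ℕ) (y : JointY M) (a : JointA M)
    (b : BSpace M) : Bel M :=
  fun ξ => ∏ k, ψ k t (y k) a b (ξ k)

/-- The joint next-period signaling-free belief `ψ̂_t(y_t, a_t, π̂_t)`. -/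
def jointSfNext (M : Model) (t : ℕ) (y : JointY M) (a : JointA M) (piH : Bel M) : Bel M :=
  fun ξ => ∏ k, sfUpdate M t k (y k) a piH (ξ k)

/-- Player `n`'s interim expected utility in the stage game `G_t(V', ψ_t, b_t)` when his
type is `xn`, he plays `an`, and the others play the CIB strategies `lamt`:
`E^{λ^{-n}_t}_{π_t}[φⁿ_t(c_t,X_t,A_t) + V'ⁿ(Xⁿ_{t+1}, B_{t+1}) | xⁿ_t, aⁿ_t]`. -/
def stageEU (M : Model) (V' : ∀ n : Fin M.N, M.X n → BSpace M → ℝ) (ψ : CIBUpdate M)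
    (lamt : ∀ n : Fin M.N, M.X n → BSpace M → M.A n → ℝ) (t : ℕ) (b : BSpace M)
    (n : Fin M.N) (xn : M.X n) (an : M.A n) : ℝ :=
  (∑ ξ : JointX M, (if ξ n = xn then b.2.1 ξ else 0) *
      ∑ a : JointA M,
        (if a n = an then ∏ k ∈ Finset.univ.erase n, lamt k (ξ k) b (a k) else 0) *
          (M.util t n b.1 ξ a +
            ∑ c' : M.C, ∑ y : JointY M, ∑ x' : M.X n,
              M.pC t c' b.1 a * (∏ k, M.q t k (y k) (ξ k) a) * M.p t n x' (ξ n) a *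
                V' n x' (c', jointPsiNext M ψ t y a b, jointSfNext M t y a b.2.2))) /
    marg M b.2.1 n xn

/-- `lamt ∈ BNE_t(V', ψ_t)`: for every `b_t`, the restriction of `lamt` to `b_t` is a
Bayesian Nash equilibrium of the stage game `G_t(V', ψ_t, b_t)`. -/
def IsBNEat (M : Model) (V' : ∀ n : Fin M.N, M.X n → BSpace M → ℝ) (ψ : CIBUpdate M)
    (lamt : ∀ n : Fin M.N, M.X n → BSpace M → M.A n → ℝ) (t : ℕ) : Prop :=
  ∀ (b : BSpace M) (n : Fin M.N) (xn : M.X n) (an : M.A n), 0 < lamt n xn b an →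
    ∀ a' : M.A n, stageEU M V' ψ lamt t b n xn a' ≤ stageEU M V' ψ lamt t b n xn an

/-- The value update `Dⁿ_t(V', λ_t, ψ_t)(xⁿ_t, b_t) = E^{λ_t}_{π_t}[Uⁿ | xⁿ_t]`. -/
def valUpd (M : Model) (V' : ∀ n : Fin M.N, M.X n → BSpace M → ℝ) (ψ : CIBUpdate M)
    (lamt : ∀ n : Fin M.N, M.X n → BSpace M → M.A n → ℝ) (t : ℕ) (n : Fin M.N)
    (xn : M.X n) (b : BSpace M) : ℝ :=
  ∑ an : M.A n, lamt n xn b an * stageEU M V' ψ lamt t b n xn an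


section AuxLemmas

open Finset

lemma sum_pi_prod {ι : Type} [Fintype ι] [DecidableEq ι] {β : ι → Type} [∀ i, Fintype (β i)]
    (F : ∀ i, β i → ℝ) : ∑ z : ∀ i, β i, ∏ i, F i (z i) = ∏ i, ∑ v, F i v := by
  rw [Finset.prod_univ_sum, Fintype.piFinset_univ]

lemma prod_update_eval {ι : Type} [Fintype ι] [DecidableEq ι] {β : ι → Type}
    (F : ∀ i, β i → ℝ) (n : ι) (δ : β n → ℝ) (z : ∀ i, β i) :
    ∏ i, Function.update F n δ i (z i) = δ (z n) * ∏ i ∈ univ.erase n, F i (z i) := by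
  rw [← Finset.mul_prod_erase univ _ (mem_univ n), Function.update_self]
  congr 1
  exact Finset.prod_congr rfl fun i hi => by
    rw [Function.update_of_ne (Finset.ne_of_mem_erase hi)]

lemma sum_pi_pin {ι : Type} [Fintype ι] [DecidableEq ι] {β : ι → Type} [∀ i, Fintype (β i)]
    (n : ι) (δ : β n → ℝ) (F : ∀ i, β i → ℝ) :
    ∑ z : ∀ i, β i, δ (z n) * ∏ i ∈ univ.erase n, F i (z i)
      = (∑ v, δ v) * ∏ i ∈ univ.erase n, ∑ v, F i v := by
  have h1 : ∀ z : ∀ i, β i, δ (z n) * ∏ i ∈ univ.erase n, F i (z i)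
      = ∏ i, Function.update F n δ i (z i) := fun z => (prod_update_eval F n δ z).symm
  rw [Finset.sum_congr rfl fun z _ => h1 z, sum_pi_prod,
    ← Finset.mul_prod_erase univ _ (mem_univ n), Function.update_self]
  congr 1
  exact Finset.prod_congr rfl fun i hi => by
    rw [Function.update_of_ne (Finset.ne_of_mem_erase hi)]

lemma sum_snoc {β : Type} [Fintype β] {n : ℕ} (f : (Fin (n+1) → β) → ℝ) :
    ∑ x : Fin (n+1) → β, f x = ∑ x0 : Fin n → β, ∑ v : β, f (Fin.snoc x0 v) := by
  rw [← Fintype.sum_prod_type']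
  exact Fintype.sum_equiv ⟨fun x => (Fin.init x, x (Fin.last n)),
    fun p => Fin.snoc p.1 p.2, fun x => Fin.snoc_init_self x,
    fun p => by simp⟩ _ _ (fun x => by simp [Fin.snoc_init_self])

variable {M : Model}

lemma sum_traj_prod {t : ℕ} (F : ∀ k, (Fin (t+1) → M.X k) → ℝ) :
    ∑ ξ : StateTraj M t, ∏ k, F k (fun s => ξ s k) = ∏ k, ∑ u, F k u := by
  calc ∑ ξ : StateTraj M t, ∏ k, F k (fun s => ξ s k)
      = ∑ z : ∀ k, Fin (t+1) → M.X k, ∏ k, F k (z k) :=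
        Fintype.sum_equiv (Equiv.piComm (fun (_ : Fin (t+1)) (k : Fin M.N) => M.X k)) _ _
          (fun ξ => rfl)
    _ = _ := sum_pi_prod F

lemma sum_traj_pin {t : ℕ} (n : Fin M.N) (δ : (Fin (t+1) → M.X n) → ℝ)
    (F : ∀ k, (Fin (t+1) → M.X k) → ℝ) :
    ∑ ξ : StateTraj M t, δ (fun s => ξ s n) * ∏ k ∈ univ.erase n, F k (fun s => ξ s k)
      = (∑ u, δ u) * ∏ k ∈ univ.erase n, ∑ u, F k u := by
  calc ∑ ξ : StateTraj M t, δ (fun s => ξ s n) * ∏ k ∈ univ.erase n, F k (fun s => ξ s k)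
      = ∑ z : ∀ k, Fin (t+1) → M.X k, δ (z n) * ∏ k ∈ univ.erase n, F k (z k) :=
        Fintype.sum_equiv (Equiv.piComm (fun (_ : Fin (t+1)) (k : Fin M.N) => M.X k)) _ _
          (fun ξ => rfl)
    _ = _ := sum_pi_pin n δ F

/-- Per-agent signaling-free path weight. -/
def wAg (M : Model) (k : Fin M.N) (t : ℕ) (a : Fin t → JointA M) (y : Fin t → JointY M)
    (x : Fin (t+1) → M.X k) : ℝ :=
  M.rhoX k (x ⟨0, Nat.succ_pos t⟩) *
    ∏ s : Fin t,
      (M.p s.1 k (x ⟨s.1 + 1, by have := s.isLt; omega⟩) (x ⟨s.1, by have := s.isLt; omega⟩) (a s) *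
        M.q s.1 k (y s k) (x ⟨s.1, by have := s.isLt; omega⟩) (a s))

lemma sfWeight_eq_prod {t : ℕ} (a : Fin t → JointA M) (y : Fin t → JointY M)
    (ξ : StateTraj M t) :
    sfWeight M t a y ξ = ∏ k, wAg M k t a y (fun s => ξ s k) := by
  unfold sfWeight wAg
  rw [Finset.prod_comm, ← Finset.prod_mul_distrib]

lemma wAg_succ {t : ℕ} (k : Fin M.N) (a : Fin (t+1) → JointA M) (y : Fin (t+1) → JointY M)
    (x : Fin (t+2) → M.X k) :
    wAg M k (t+1) a y x
      = wAg M k t (fun s => a s.castSucc) (fun s => y s.castSucc) (fun s => x s.castSucc)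
        * (M.p t k (x (Fin.last (t+1))) (x (Fin.castSucc (Fin.last t))) (a (Fin.last t))
           * M.q t k (y (Fin.last t) k) (x (Fin.castSucc (Fin.last t))) (a (Fin.last t))) := by
  unfold wAg
  rw [Fin.prod_univ_castSucc, ← mul_assoc]
  rfl

end AuxLemmas
section Construction

open Finset

variable {M : Model}

/-- The CIB information state attached to a common history. -/
def Bsp (ψ : CIBUpdate M) (t : ℕ) (hc : CommonHist M t) : BSpace M :=
  (hc.1 (Fin.last t), gammaPsi M ψ t hc, sfCIB M t hc)

/-- The Bayes normalizer of agent `k`'s CIB update. -/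
def Zed (lam : CIBStrat M) (ψ : CIBUpdate M) (t : ℕ) (hc : CommonHist M t) (k : Fin M.N)
    (Y : M.Y k) (a : JointA M) : ℝ :=
  ∑ x, M.q t k Y x a * lam k t x (Bsp ψ t hc) (a k) * marg M (gammaPsi M ψ t hc) k x

/-- Total signaling-free weight of paths ending at `v`. -/
def Wend (M : Model) (t : ℕ) (aa : Fin (t+1) → JointA M) (yy : Fin (t+1) → JointY M)
    (k : Fin M.N) (v : M.X k) : ℝ :=
  ∑ x0 : Fin (t+1) → M.X k, wAg M k (t+1) aa yy (Fin.snoc x0 v)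

/-- Agent `k`'s common-information trajectory belief. -/
def nu (lam : CIBStrat M) (ψ : CIBUpdate M) (k : Fin M.N) :
    (t : ℕ) → CommonHist M t → (Fin (t+1) → M.X k) → ℝ
  | 0, _, x => M.rhoX k (x 0)
  | t+1, hc, x =>
    if 0 < Zed lam ψ t (restrictC M hc) k (hc.2.2 (Fin.last t) k) (hc.2.1 (Fin.last t)) then
      nu lam ψ k t (restrictC M hc) (fun s => x s.castSucc) *
        (M.p t k (x (Fin.last (t+1))) (x (Fin.castSucc (Fin.last t))) (hc.2.1 (Fin.last t)) *
         M.q t k (hc.2.2 (Fin.last t) k) (x (Fin.castSucc (Fin.last t))) (hc.2.1 (Fin.last t)) *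
         lam k t (x (Fin.castSucc (Fin.last t))) (Bsp ψ t (restrictC M hc))
           ((hc.2.1 (Fin.last t)) k)) /
        Zed lam ψ t (restrictC M hc) k (hc.2.2 (Fin.last t) k) (hc.2.1 (Fin.last t))
    else
      ψ k t (hc.2.2 (Fin.last t) k) (hc.2.1 (Fin.last t)) (Bsp ψ t (restrictC M hc))
          (x (Fin.last (t+1))) *
        (if 0 < Wend M t hc.2.1 hc.2.2 k (x (Fin.last (t+1))) then
           wAg M k (t+1) hc.2.1 hc.2.2 x / Wend M t hc.2.1 hc.2.2 k (x (Fin.last (t+1)))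
         else (Fintype.card (Fin (t+1) → M.X k) : ℝ)⁻¹)

lemma gammaPsi_succ (ψ : CIBUpdate M) (t : ℕ) (hc : CommonHist M (t+1)) (ξ : JointX M) :
    gammaPsi M ψ (t+1) hc ξ
      = ∏ k, ψ k t (hc.2.2 (Fin.last t) k) (hc.2.1 (Fin.last t))
          (Bsp ψ t (restrictC M hc)) (ξ k) := rfl

lemma nonempty_X (hM : M.Valid) (k : Fin M.N) : Nonempty (M.X k) := by
  by_contra h
  have : (univ : Finset (M.X k)) = ∅ := univ_eq_empty_iff.2 (not_nonempty_iff.1 h)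
  have h1 := hM.2.2.2.1 k
  rw [this, Finset.sum_empty] at h1
  exact one_ne_zero h1.symm

lemma wAg_nonneg (hM : M.Valid) {k : Fin M.N} {t : ℕ} (a : Fin t → JointA M)
    (y : Fin t → JointY M) (x : Fin (t+1) → M.X k) : 0 ≤ wAg M k t a y x :=
  mul_nonneg (hM.2.2.1 k _) (Finset.prod_nonneg fun s _ =>
    mul_nonneg (hM.2.2.2.2.2.2.1 _ _ _ _ _) (hM.2.2.2.2.2.2.2.2.1 _ _ _ _ _))

lemma Wend_nonneg (hM : M.Valid) {t : ℕ} (aa : Fin (t+1) → JointA M)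
    (yy : Fin (t+1) → JointY M) (k : Fin M.N) (v : M.X k) : 0 ≤ Wend M t aa yy k v :=
  Finset.sum_nonneg fun _ _ => wAg_nonneg hM _ _ _

lemma gammaPsi_nonneg (hM : M.Valid) (ψ : CIBUpdate M) (hψ : IsCIBUpdate M ψ) (t : ℕ)
    (hc : CommonHist M t) (ξ : JointX M) : 0 ≤ gammaPsi M ψ t hc ξ := by
  cases t with
  | zero => exact Finset.prod_nonneg fun k _ => hM.2.2.1 k _
  | succ t => exact Finset.prod_nonneg fun k _ => (hψ k t _ _ _).1 _

lemma marg_nonneg {π : Bel M} (hπ : ∀ ξ, 0 ≤ π ξ) (k : Fin M.N) (v : M.X k) :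
    0 ≤ marg M π k v :=
  Finset.sum_nonneg fun ξ _ => by split_ifs; exacts [hπ ξ, le_rfl]

lemma Zed_nonneg (hM : M.Valid) {lam : CIBStrat M} {ψ : CIBUpdate M}
    (hlam : IsCIBStrat M lam) (hψ : IsCIBUpdate M ψ) (t : ℕ) (hc : CommonHist M t)
    (k : Fin M.N) (Y : M.Y k) (a : JointA M) : 0 ≤ Zed lam ψ t hc k Y a :=
  Finset.sum_nonneg fun x _ => mul_nonneg (mul_nonneg (hM.2.2.2.2.2.2.2.2.1 _ _ _ _ _)
    ((hlam k t x _).1 _)) (marg_nonneg (gammaPsi_nonneg hM ψ hψ t hc) k x)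

lemma marg_prod (G : ∀ j : Fin M.N, M.X j → ℝ) (k : Fin M.N) (v : M.X k) :
    marg M (fun ξ => ∏ j, G j (ξ j)) k v = G k v * ∏ j ∈ univ.erase k, ∑ z, G j z := by
  unfold marg
  have h1 : ∀ ξ : JointX M, (if ξ k = v then ∏ j, G j (ξ j) else 0)
      = (if ξ k = v then G k (ξ k) else 0) * ∏ j ∈ univ.erase k, G j (ξ j) := by
    intro ξ; split_ifs with h
    · rw [← Finset.mul_prod_erase univ (fun j => G j (ξ j)) (mem_univ k)]
    · rw [zero_mul]
  rw [Finset.sum_congr rfl fun ξ _ => h1 ξ,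
    sum_pi_pin k (fun z => if z = v then G k z else 0) G,
    Finset.sum_ite_eq' univ v (G k), if_pos (mem_univ v)]

lemma marg_gammaPsi_zero (hM : M.Valid) (ψ : CIBUpdate M) (hc : CommonHist M 0)
    (k : Fin M.N) (v : M.X k) : marg M (gammaPsi M ψ 0 hc) k v = M.rhoX k v := by
  have : gammaPsi M ψ 0 hc = fun ξ => ∏ j, M.rhoX j (ξ j) := rfl
  rw [this, marg_prod]
  rw [Finset.prod_congr rfl fun j _ => hM.2.2.2.1 j, Finset.prod_const_one, mul_one]

lemma marg_gammaPsi_succ (ψ : CIBUpdate M) (hψ : IsCIBUpdate M ψ) (t : ℕ)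
    (hc : CommonHist M (t+1)) (k : Fin M.N) (v : M.X k) :
    marg M (gammaPsi M ψ (t+1) hc) k v
      = ψ k t (hc.2.2 (Fin.last t) k) (hc.2.1 (Fin.last t)) (Bsp ψ t (restrictC M hc)) v := by
  have : gammaPsi M ψ (t+1) hc = fun ξ => ∏ j, ψ j t (hc.2.2 (Fin.last t) j)
      (hc.2.1 (Fin.last t)) (Bsp ψ t (restrictC M hc)) (ξ j) := rfl
  rw [this, marg_prod]
  rw [Finset.prod_congr rfl fun j _ => (hψ j t _ _ _).2, Finset.prod_const_one, mul_one]

end Construction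
section MidLemmas

open Finset

lemma VrhoX0 {M : Model} (hM : M.Valid) : ∀ n x, 0 ≤ M.rhoX n x := hM.2.2.1
lemma VrhoX1 {M : Model} (hM : M.Valid) : ∀ n, ∑ x, M.rhoX n x = 1 := hM.2.2.2.1
lemma Vp0 {M : Model} (hM : M.Valid) : ∀ t n x' x a, 0 ≤ M.p t n x' x a := hM.2.2.2.2.2.2.1
lemma Vp1 {M : Model} (hM : M.Valid) : ∀ t n x a, ∑ x', M.p t n x' x a = 1 := hM.2.2.2.2.2.2.2.1
lemma Vq0 {M : Model} (hM : M.Valid) : ∀ t n y x a, 0 ≤ M.q t n y x a := hM.2.2.2.2.2.2.2.2.1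
lemma Vq1 {M : Model} (hM : M.Valid) : ∀ t n x a, ∑ y, M.q t n y x a = 1 := hM.2.2.2.2.2.2.2.2.2


open Finset

variable {M : Model}

lemma sum_fiber_last {k : Fin M.N} {t : ℕ} (f : (Fin (t+1) → M.X k) → ℝ) (g : M.X k → ℝ) :
    ∑ u, f u * g (u (Fin.last t)) = ∑ v, (∑ u, if u (Fin.last t) = v then f u else 0) * g v := by
  have h1 : ∀ v, (∑ u, if u (Fin.last t) = v then f u else 0) * g v
      = ∑ u, if u (Fin.last t) = v then f u * g v else 0 := by
    intro v; rw [Finset.sum_mul]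
    exact Finset.sum_congr rfl fun u _ => by split_ifs <;> simp
  rw [Finset.sum_congr rfl fun v _ => h1 v, Finset.sum_comm]
  refine Finset.sum_congr rfl fun u _ => ?_
  rw [Finset.sum_ite_eq univ (u (Fin.last t)) (fun v => f u * g v), if_pos (mem_univ _)]

lemma snoc_coord {t : ℕ} (ξ : StateTraj M t) (z : JointX M) (k : Fin M.N) :
    (fun s : Fin (t+2) => (Fin.snoc ξ z : Fin (t+2) → JointX M) s k)
      = Fin.snoc (fun s => ξ s k) (z k) := by
  funext s
  refine Fin.lastCases ?_ (fun i => ?_) s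
  · show (Fin.snoc ξ z : Fin (t+2) → JointX M) (Fin.last (t+1)) k = _
    rw [Fin.snoc_last, Fin.snoc_last]
  · show (Fin.snoc ξ z : Fin (t+2) → JointX M) i.castSucc k = _
    rw [Fin.snoc_castSucc, Fin.snoc_castSucc]

lemma wAg_restrict {t : ℕ} (k : Fin M.N) (hc : CommonHist M (t+1)) (x : Fin (t+2) → M.X k) :
    wAg M k (t+1) hc.2.1 hc.2.2 x
      = wAg M k t (restrictC M hc).2.1 (restrictC M hc).2.2 (fun s => x s.castSucc)
        * (M.p t k (x (Fin.last (t+1))) (x (Fin.castSucc (Fin.last t))) (hc.2.1 (Fin.last t))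
           * M.q t k (hc.2.2 (Fin.last t) k) (x (Fin.castSucc (Fin.last t)))
             (hc.2.1 (Fin.last t))) :=
  wAg_succ k hc.2.1 hc.2.2 x

lemma wAg_snoc_restrict {t : ℕ} (k : Fin M.N) (hc : CommonHist M (t+1))
    (x0 : Fin (t+1) → M.X k) (v : M.X k) :
    wAg M k (t+1) hc.2.1 hc.2.2 (Fin.snoc x0 v)
      = wAg M k t (restrictC M hc).2.1 (restrictC M hc).2.2 x0
        * (M.p t k v (x0 (Fin.last t)) (hc.2.1 (Fin.last t))
           * M.q t k (hc.2.2 (Fin.last t) k) (x0 (Fin.last t)) (hc.2.1 (Fin.last t))) := by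
  rw [wAg_restrict,
    show (fun s : Fin (t+1) => (Fin.snoc x0 v : Fin (t+2) → M.X k) s.castSucc) = x0 from
      funext fun s => Fin.snoc_castSucc _ _ _,
    Fin.snoc_last, Fin.snoc_castSucc]

lemma Wend_eq {t : ℕ} (hc : CommonHist M (t+1)) (k : Fin M.N) (v : M.X k) :
    Wend M t hc.2.1 hc.2.2 k v
      = ∑ x0 : Fin (t+1) → M.X k,
          wAg M k t (restrictC M hc).2.1 (restrictC M hc).2.2 x0
            * (M.p t k v (x0 (Fin.last t)) (hc.2.1 (Fin.last t))
               * M.q t k (hc.2.2 (Fin.last t) k) (x0 (Fin.last t)) (hc.2.1 (Fin.last t))) :=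
  Finset.sum_congr rfl fun x0 _ => wAg_snoc_restrict k hc x0 v

lemma sum_wAg_succ (hM : M.Valid) {t : ℕ} (hc : CommonHist M (t+1)) (k : Fin M.N) :
    ∑ x : Fin (t+2) → M.X k, wAg M k (t+1) hc.2.1 hc.2.2 x
      = ∑ x0 : Fin (t+1) → M.X k,
          wAg M k t (restrictC M hc).2.1 (restrictC M hc).2.2 x0 *
            M.q t k (hc.2.2 (Fin.last t) k) (x0 (Fin.last t)) (hc.2.1 (Fin.last t)) := by
  rw [sum_snoc]
  refine Finset.sum_congr rfl fun x0 _ => ?_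
  rw [Finset.sum_congr rfl fun v _ => wAg_snoc_restrict k hc x0 v]
  calc ∑ v : M.X k, wAg M k t (restrictC M hc).2.1 (restrictC M hc).2.2 x0
        * (M.p t k v (x0 (Fin.last t)) (hc.2.1 (Fin.last t))
           * M.q t k (hc.2.2 (Fin.last t) k) (x0 (Fin.last t)) (hc.2.1 (Fin.last t)))
      = (wAg M k t (restrictC M hc).2.1 (restrictC M hc).2.2 x0 *
          M.q t k (hc.2.2 (Fin.last t) k) (x0 (Fin.last t)) (hc.2.1 (Fin.last t)))
        * ∑ v : M.X k, M.p t k v (x0 (Fin.last t)) (hc.2.1 (Fin.last t)) := by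
        rw [Finset.mul_sum]; exact Finset.sum_congr rfl fun v _ => by ring
    _ = _ := by rw [hM.2.2.2.2.2.2.2.1 t k (x0 (Fin.last t)) (hc.2.1 (Fin.last t))]; ring

end MidLemmas
section SfLemmas

open Finset

variable {M : Model}

lemma marg_sfCIB {t : ℕ} (hc : CommonHist M t) (k : Fin M.N) (v : M.X k)
    (hpos : ∀ j, 0 < ∑ u : Fin (t+1) → M.X j, wAg M j t hc.2.1 hc.2.2 u) :
    marg M (sfCIB M t hc) k v
      = (∑ u : Fin (t+1) → M.X k, if u (Fin.last t) = v then wAg M k t hc.2.1 hc.2.2 u else 0) /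
        (∑ u : Fin (t+1) → M.X k, wAg M k t hc.2.1 hc.2.2 u) := by
  have hEpos : 0 < ∏ j ∈ univ.erase k, ∑ u, wAg M j t hc.2.1 hc.2.2 u :=
    Finset.prod_pos fun j _ => hpos j
  have hD : (∑ ξ : StateTraj M t, sfWeight M t hc.2.1 hc.2.2 ξ)
      = ∏ j, ∑ u, wAg M j t hc.2.1 hc.2.2 u := by
    rw [Finset.sum_congr rfl fun ξ _ => sfWeight_eq_prod _ _ ξ, sum_traj_prod]
  unfold marg sfCIB
  have step1 : ∀ xJ : JointX M,
      (if xJ k = v then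
        (∑ ξ : StateTraj M t, if ξ (Fin.last t) = xJ then sfWeight M t hc.2.1 hc.2.2 ξ else 0) /
          (∑ ξ : StateTraj M t, sfWeight M t hc.2.1 hc.2.2 ξ) else 0)
      = (if xJ k = v then
          (∑ ξ : StateTraj M t, if ξ (Fin.last t) = xJ then sfWeight M t hc.2.1 hc.2.2 ξ else 0)
        else 0) / (∑ ξ : StateTraj M t, sfWeight M t hc.2.1 hc.2.2 ξ) := by
    intro xJ; split_ifs <;> simp
  rw [Finset.sum_congr rfl fun xJ _ => step1 xJ, ← Finset.sum_div]
  have step2 : (∑ xJ : JointX M, if xJ k = v then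
        (∑ ξ : StateTraj M t, if ξ (Fin.last t) = xJ then sfWeight M t hc.2.1 hc.2.2 ξ else 0)
      else 0)
      = ∑ ξ : StateTraj M t, (if ξ (Fin.last t) k = v then sfWeight M t hc.2.1 hc.2.2 ξ else 0) := by
    have h1 : ∀ xJ : JointX M, (if xJ k = v then
          (∑ ξ : StateTraj M t, if ξ (Fin.last t) = xJ then sfWeight M t hc.2.1 hc.2.2 ξ else 0)
        else 0)
        = ∑ ξ : StateTraj M t, (if xJ k = v then
            (if ξ (Fin.last t) = xJ then sfWeight M t hc.2.1 hc.2.2 ξ else 0) else 0) := by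
      intro xJ; split_ifs with h
      · rfl
      · rw [Finset.sum_const_zero]
    rw [Finset.sum_congr rfl fun xJ _ => h1 xJ, Finset.sum_comm]
    refine Finset.sum_congr rfl fun ξ _ => ?_
    rw [Finset.sum_eq_single (ξ (Fin.last t))]
    · split_ifs with h1 h2
      · rfl
      · exact absurd rfl h2
      · rfl
    · intro xJ _ hne
      split_ifs with h1 h2
      · exact absurd h2.symm hne
      · rfl
      · rfl
    · intro h; exact absurd (mem_univ _) h
  rw [step2]
  have step3 : (∑ ξ : StateTraj M t, (if ξ (Fin.last t) k = v then sfWeight M t hc.2.1 hc.2.2 ξ else 0))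
      = (∑ u : Fin (t+1) → M.X k, if u (Fin.last t) = v then wAg M k t hc.2.1 hc.2.2 u else 0)
        * ∏ j ∈ univ.erase k, ∑ u, wAg M j t hc.2.1 hc.2.2 u := by
    have h2 : ∀ ξ : StateTraj M t,
        (if ξ (Fin.last t) k = v then sfWeight M t hc.2.1 hc.2.2 ξ else 0)
        = (if (fun s => ξ s k) (Fin.last t) = v then wAg M k t hc.2.1 hc.2.2 (fun s => ξ s k) else 0)
          * ∏ j ∈ univ.erase k, wAg M j t hc.2.1 hc.2.2 (fun s => ξ s j) := by
      intro ξ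
      rw [sfWeight_eq_prod]
      split_ifs with h
      · rw [← Finset.mul_prod_erase univ (fun j => wAg M j t hc.2.1 hc.2.2 (fun s => ξ s j))
          (mem_univ k)]
      · rw [zero_mul]
    rw [Finset.sum_congr rfl fun ξ _ => h2 ξ]
    exact sum_traj_pin k (fun u => if u (Fin.last t) = v then wAg M k t hc.2.1 hc.2.2 u else 0)
      (fun j u => wAg M j t hc.2.1 hc.2.2 u)
  rw [step3, hD, ← Finset.mul_prod_erase univ _ (mem_univ k)]
  exact mul_div_mul_right _ _ (ne_of_gt hEpos)

end SfLemmas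
section MainInduction

open Finset

variable {M : Model}

lemma nu_zero (lam : CIBStrat M) (ψ : CIBUpdate M) (k : Fin M.N) (hc : CommonHist M 0)
    (x : Fin 1 → M.X k) : nu lam ψ k 0 hc x = M.rhoX k (x 0) := rfl

lemma nu_succ (lam : CIBStrat M) (ψ : CIBUpdate M) (k : Fin M.N) (t : ℕ)
    (hc : CommonHist M (t+1)) (x : Fin (t+2) → M.X k) :
    nu lam ψ k (t+1) hc x =
    if 0 < Zed lam ψ t (restrictC M hc) k (hc.2.2 (Fin.last t) k) (hc.2.1 (Fin.last t)) then
      nu lam ψ k t (restrictC M hc) (fun s => x s.castSucc) *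
        (M.p t k (x (Fin.last (t+1))) (x (Fin.castSucc (Fin.last t))) (hc.2.1 (Fin.last t)) *
         M.q t k (hc.2.2 (Fin.last t) k) (x (Fin.castSucc (Fin.last t))) (hc.2.1 (Fin.last t)) *
         lam k t (x (Fin.castSucc (Fin.last t))) (Bsp ψ t (restrictC M hc))
           ((hc.2.1 (Fin.last t)) k)) /
        Zed lam ψ t (restrictC M hc) k (hc.2.2 (Fin.last t) k) (hc.2.1 (Fin.last t))
    else
      ψ k t (hc.2.2 (Fin.last t) k) (hc.2.1 (Fin.last t)) (Bsp ψ t (restrictC M hc))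
          (x (Fin.last (t+1))) *
        (if 0 < Wend M t hc.2.1 hc.2.2 k (x (Fin.last (t+1))) then
           wAg M k (t+1) hc.2.1 hc.2.2 x / Wend M t hc.2.1 hc.2.2 k (x (Fin.last (t+1)))
         else (Fintype.card (Fin (t+1) → M.X k) : ℝ)⁻¹) := rfl

lemma nu_main {lam : CIBStrat M} {ψ : CIBUpdate M} (hM : M.Valid) (hlam : IsCIBStrat M lam)
    (hψ : IsCIBUpdate M ψ) (hcons : UpdateConsistent M ψ lam) :
    ∀ (t : ℕ) (hc : CommonHist M t),
      (∀ (k : Fin M.N) x, 0 ≤ nu lam ψ k t hc x) ∧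
      (∀ k : Fin M.N, ∑ x, nu lam ψ k t hc x = 1) ∧
      (∀ (k : Fin M.N) v, (∑ x, if x (Fin.last t) = v then nu lam ψ k t hc x else 0)
          = marg M (gammaPsi M ψ t hc) k v) ∧
      ((∀ j, 0 < ∑ x, wAg M j t hc.2.1 hc.2.2 x) →
        ∀ (k : Fin M.N) x, wAg M k t hc.2.1 hc.2.2 x = 0 → nu lam ψ k t hc x = 0) := by
  intro t
  induction t with
  | zero =>
    intro hc
    refine ⟨fun k x => VrhoX0 hM k _, fun k => ?_, fun k v => ?_, fun _ k x hw => ?_⟩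
    · calc ∑ x : Fin 1 → M.X k, nu lam ψ k 0 hc x
          = ∑ v, M.rhoX k v :=
            Fintype.sum_equiv (Equiv.funUnique (Fin 1) (M.X k)) _ _ (fun x => rfl)
        _ = 1 := VrhoX1 hM k
    · rw [marg_gammaPsi_zero hM]
      calc (∑ x : Fin 1 → M.X k, if x (Fin.last 0) = v then nu lam ψ k 0 hc x else 0)
          = ∑ z, if z = v then M.rhoX k z else 0 :=
            Fintype.sum_equiv (Equiv.funUnique (Fin 1) (M.X k)) _ _ (fun x => rfl)
        _ = M.rhoX k v := by
            rw [Finset.sum_ite_eq' univ v (M.rhoX k), if_pos (mem_univ _)]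
    · have h0 : wAg M k 0 hc.2.1 hc.2.2 x = M.rhoX k (x 0) := by
        unfold wAg
        rw [Finset.univ_eq_empty (α := Fin 0), Finset.prod_empty, mul_one]
        exact congrArg (fun z => M.rhoX k (x z)) (Fin.ext rfl)
      rw [nu_zero, ← h0, hw]
  | succ t IH =>
    intro hc
    obtain ⟨IH0, IH1, IH2, IH3⟩ := IH (restrictC M hc)
    have hMain : ∀ (k : Fin M.N) (v : M.X k),
        (∑ x0 : Fin (t+1) → M.X k, nu lam ψ k (t+1) hc (Fin.snoc x0 v))
          = ψ k t (hc.2.2 (Fin.last t) k) (hc.2.1 (Fin.last t)) (Bsp ψ t (restrictC M hc)) v := by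
      intro k v
      by_cases hZ : 0 < Zed lam ψ t (restrictC M hc) k (hc.2.2 (Fin.last t) k) (hc.2.1 (Fin.last t))
      · have h1 : ∀ x0 : Fin (t+1) → M.X k, nu lam ψ k (t+1) hc (Fin.snoc x0 v)
            = M.p t k v (x0 (Fin.last t)) (hc.2.1 (Fin.last t)) * (M.q t k (hc.2.2 (Fin.last t) k) (x0 (Fin.last t)) (hc.2.1 (Fin.last t)) *
                lam k t (x0 (Fin.last t)) (Bsp ψ t (restrictC M hc)) ((hc.2.1 (Fin.last t)) k)) * nu lam ψ k t (restrictC M hc) x0 / (Zed lam ψ t (restrictC M hc) k (hc.2.2 (Fin.last t) k) (hc.2.1 (Fin.last t))) := by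
          intro x0
          rw [nu_succ, if_pos hZ]
          simp only [Fin.snoc_last, Fin.snoc_castSucc]
          ring
        have h2 : (∑ x0 : Fin (t+1) → M.X k,
              M.p t k v (x0 (Fin.last t)) (hc.2.1 (Fin.last t)) * (M.q t k (hc.2.2 (Fin.last t) k) (x0 (Fin.last t)) (hc.2.1 (Fin.last t)) *
                lam k t (x0 (Fin.last t)) (Bsp ψ t (restrictC M hc)) ((hc.2.1 (Fin.last t)) k)) * nu lam ψ k t (restrictC M hc) x0)
            = ∑ w, M.p t k v w (hc.2.1 (Fin.last t)) * (M.q t k (hc.2.2 (Fin.last t) k) w (hc.2.1 (Fin.last t)) * lam k t w (Bsp ψ t (restrictC M hc)) ((hc.2.1 (Fin.last t)) k))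
                * marg M (gammaPsi M ψ t (restrictC M hc)) k w := by
          calc (∑ x0 : Fin (t+1) → M.X k,
              M.p t k v (x0 (Fin.last t)) (hc.2.1 (Fin.last t)) * (M.q t k (hc.2.2 (Fin.last t) k) (x0 (Fin.last t)) (hc.2.1 (Fin.last t)) *
                lam k t (x0 (Fin.last t)) (Bsp ψ t (restrictC M hc)) ((hc.2.1 (Fin.last t)) k)) * nu lam ψ k t (restrictC M hc) x0)
              = ∑ x0 : Fin (t+1) → M.X k, nu lam ψ k t (restrictC M hc) x0 *
                  (M.p t k v (x0 (Fin.last t)) (hc.2.1 (Fin.last t)) * (M.q t k (hc.2.2 (Fin.last t) k) (x0 (Fin.last t)) (hc.2.1 (Fin.last t)) *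
                    lam k t (x0 (Fin.last t)) (Bsp ψ t (restrictC M hc)) ((hc.2.1 (Fin.last t)) k))) :=
                Finset.sum_congr rfl fun x0 _ => by ring
            _ = ∑ w, (∑ x0 : Fin (t+1) → M.X k, if x0 (Fin.last t) = w then nu lam ψ k t (restrictC M hc) x0 else 0) *
                  (M.p t k v w (hc.2.1 (Fin.last t)) * (M.q t k (hc.2.2 (Fin.last t) k) w (hc.2.1 (Fin.last t)) * lam k t w (Bsp ψ t (restrictC M hc)) ((hc.2.1 (Fin.last t)) k))) :=
                sum_fiber_last (nu lam ψ k t (restrictC M hc)) (fun w => M.p t k v w (hc.2.1 (Fin.last t)) *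
                  (M.q t k (hc.2.2 (Fin.last t) k) w (hc.2.1 (Fin.last t)) * lam k t w (Bsp ψ t (restrictC M hc)) ((hc.2.1 (Fin.last t)) k)))
            _ = _ := Finset.sum_congr rfl fun w _ => by rw [IH2 k w]; ring
        rw [Finset.sum_congr rfl fun x0 _ => h1 x0, ← Finset.sum_div, h2]
        exact ((hcons k t (hc.2.2 (Fin.last t) k) (hc.2.1 (Fin.last t)) (Bsp ψ t (restrictC M hc))).1 hZ v).symm
      · by_cases hW : 0 < Wend M t hc.2.1 hc.2.2 k v
        · have h1 : ∀ x0 : Fin (t+1) → M.X k, nu lam ψ k (t+1) hc (Fin.snoc x0 v)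
              = ψ k t (hc.2.2 (Fin.last t) k) (hc.2.1 (Fin.last t)) (Bsp ψ t (restrictC M hc)) v * (wAg M k (t+1) hc.2.1 hc.2.2 (Fin.snoc x0 v) /
                  Wend M t hc.2.1 hc.2.2 k v) := by
            intro x0
            rw [nu_succ, if_neg hZ]
            simp only [Fin.snoc_last]
            rw [if_pos hW]
          rw [Finset.sum_congr rfl fun x0 _ => h1 x0, ← Finset.mul_sum, ← Finset.sum_div]
          rw [show (∑ x0 : Fin (t+1) → M.X k, wAg M k (t+1) hc.2.1 hc.2.2 (Fin.snoc x0 v))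
              = Wend M t hc.2.1 hc.2.2 k v from rfl]
          rw [div_self (ne_of_gt hW), mul_one]
        · have h1 : ∀ x0 : Fin (t+1) → M.X k, nu lam ψ k (t+1) hc (Fin.snoc x0 v)
              = ψ k t (hc.2.2 (Fin.last t) k) (hc.2.1 (Fin.last t)) (Bsp ψ t (restrictC M hc)) v * (Fintype.card (Fin (t+1) → M.X k) : ℝ)⁻¹ := by
            intro x0
            rw [nu_succ, if_neg hZ]
            simp only [Fin.snoc_last]
            rw [if_neg hW]
          rw [Finset.sum_congr rfl fun x0 _ => h1 x0, Finset.sum_const, card_univ,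
            nsmul_eq_mul]
          have hcard : (0:ℝ) < (Fintype.card (Fin (t+1) → M.X k) : ℝ) := by
            have : Nonempty (Fin (t+1) → M.X k) := ⟨fun _ => (nonempty_X hM k).some⟩
            exact_mod_cast Fintype.card_pos
          rw [← mul_assoc, mul_comm ((Fintype.card (Fin (t+1) → M.X k) : ℝ)) _, mul_assoc,
            mul_inv_cancel₀ (ne_of_gt hcard), mul_one]
    refine ⟨?_, ?_, ?_, ?_⟩
    · intro k x
      rw [nu_succ]
      split_ifs with hZ hW
      · exact div_nonneg (mul_nonneg (IH0 k _) (mul_nonneg (mul_nonneg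
          (Vp0 hM _ _ _ _ _) (Vq0 hM _ _ _ _ _)) ((hlam k t _ _).1 _))) (le_of_lt hZ)
      · exact mul_nonneg ((hψ k t _ _ _).1 _)
          (div_nonneg (wAg_nonneg hM _ _ _) (le_of_lt hW))
      · exact mul_nonneg ((hψ k t _ _ _).1 _) (inv_nonneg.2 (Nat.cast_nonneg _))
    · intro k
      rw [sum_snoc (nu lam ψ k (t+1) hc), Finset.sum_comm,
        Finset.sum_congr rfl fun v _ => hMain k v]
      exact (hψ k t (hc.2.2 (Fin.last t) k) (hc.2.1 (Fin.last t)) (Bsp ψ t (restrictC M hc))).2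
    · intro k v
      rw [marg_gammaPsi_succ ψ hψ]
      calc (∑ x : Fin (t+2) → M.X k, if x (Fin.last (t+1)) = v then nu lam ψ k (t+1) hc x else 0)
          = ∑ x0 : Fin (t+1) → M.X k, ∑ w : M.X k,
              if w = v then nu lam ψ k (t+1) hc (Fin.snoc x0 w) else 0 := by
            rw [sum_snoc (fun x => if x (Fin.last (t+1)) = v then nu lam ψ k (t+1) hc x else 0)]
            exact Finset.sum_congr rfl fun x0 _ => Finset.sum_congr rfl fun w _ => by
              rw [show (Fin.snoc x0 w : Fin (t+2) → M.X k) (Fin.last (t+1)) = w from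
                Fin.snoc_last _ _]
        _ = ∑ x0 : Fin (t+1) → M.X k, nu lam ψ k (t+1) hc (Fin.snoc x0 v) :=
            Finset.sum_congr rfl fun x0 _ => by
              rw [Finset.sum_ite_eq' univ v (fun w => nu lam ψ k (t+1) hc (Fin.snoc x0 w)),
                if_pos (mem_univ _)]
        _ = _ := hMain k v
    · intro hpos k x hw
      have hpos' : ∀ j, 0 < ∑ x0 : Fin (t+1) → M.X j,
          wAg M j t (restrictC M hc).2.1 (restrictC M hc).2.2 x0 := by
        intro j
        rcases lt_or_eq_of_le (Finset.sum_nonneg fun x0 _ =>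
          wAg_nonneg hM (k := j) (restrictC M hc).2.1 (restrictC M hc).2.2 x0) with h | h
        · exact h
        · exfalso
          have hz : ∀ x0, wAg M j t (restrictC M hc).2.1 (restrictC M hc).2.2 x0 = 0 := fun x0 =>
            (Finset.sum_eq_zero_iff_of_nonneg (fun x0 _ =>
              wAg_nonneg hM (k := j) (restrictC M hc).2.1 (restrictC M hc).2.2 x0)).1 h.symm x0 (mem_univ _)
          have hzz : ∑ x : Fin (t+2) → M.X j, wAg M j (t+1) hc.2.1 hc.2.2 x = 0 := by
            rw [sum_wAg_succ hM hc j]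
            exact Finset.sum_eq_zero fun x0 _ => by rw [hz x0, zero_mul]
          exact absurd hzz (ne_of_gt (hpos j))
      rw [nu_succ]
      split_ifs with hZ hW
      · rw [wAg_restrict] at hw
        rcases mul_eq_zero.1 hw with h1 | h2
        · rw [IH3 hpos' k _ h1, zero_mul, zero_div]
        · rcases mul_eq_zero.1 h2 with h3 | h3
          · rw [h3]; simp
          · rw [h3]; simp
      · rw [hw, zero_div, mul_zero]
      · have hZ0 : Zed lam ψ t (restrictC M hc) k (hc.2.2 (Fin.last t) k) (hc.2.1 (Fin.last t)) = 0 :=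
          le_antisymm (not_lt.1 hZ) (Zed_nonneg hM hlam hψ t (restrictC M hc) k (hc.2.2 (Fin.last t) k) (hc.2.1 (Fin.last t)))
        have hW0 : Wend M t hc.2.1 hc.2.2 k (x (Fin.last (t+1))) = 0 :=
          le_antisymm (not_lt.1 hW) (Wend_nonneg hM _ _ _ _)
        have hS : 0 < ∑ u : Fin (t+1) → M.X k, wAg M k t (restrictC M hc).2.1 (restrictC M hc).2.2 u := hpos' k
        have hq : 0 < ∑ w, M.q t k (hc.2.2 (Fin.last t) k) w (hc.2.1 (Fin.last t)) * marg M (sfCIB M t (restrictC M hc)) k w := by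
          have heq : (∑ w, M.q t k (hc.2.2 (Fin.last t) k) w (hc.2.1 (Fin.last t)) * marg M (sfCIB M t (restrictC M hc)) k w)
              = (∑ u : Fin (t+1) → M.X k, wAg M k t (restrictC M hc).2.1 (restrictC M hc).2.2 u *
                  M.q t k (hc.2.2 (Fin.last t) k) (u (Fin.last t)) (hc.2.1 (Fin.last t))) /
                (∑ u : Fin (t+1) → M.X k, wAg M k t (restrictC M hc).2.1 (restrictC M hc).2.2 u) := by
            calc (∑ w, M.q t k (hc.2.2 (Fin.last t) k) w (hc.2.1 (Fin.last t)) * marg M (sfCIB M t (restrictC M hc)) k w)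
                = ∑ w, (∑ u : Fin (t+1) → M.X k,
                      if u (Fin.last t) = w then wAg M k t (restrictC M hc).2.1 (restrictC M hc).2.2 u else 0) *
                    M.q t k (hc.2.2 (Fin.last t) k) w (hc.2.1 (Fin.last t)) /
                    (∑ u : Fin (t+1) → M.X k, wAg M k t (restrictC M hc).2.1 (restrictC M hc).2.2 u) :=
                  Finset.sum_congr rfl fun w _ => by
                    rw [marg_sfCIB (restrictC M hc) k w hpos']; ring
              _ = (∑ w, (∑ u : Fin (t+1) → M.X k,
                      if u (Fin.last t) = w then wAg M k t (restrictC M hc).2.1 (restrictC M hc).2.2 u else 0) *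
                    M.q t k (hc.2.2 (Fin.last t) k) w (hc.2.1 (Fin.last t))) /
                    (∑ u : Fin (t+1) → M.X k, wAg M k t (restrictC M hc).2.1 (restrictC M hc).2.2 u) := by
                  rw [Finset.sum_div]
              _ = _ := by
                  rw [← sum_fiber_last (wAg M k t (restrictC M hc).2.1 (restrictC M hc).2.2)
                    (fun w => M.q t k (hc.2.2 (Fin.last t) k) w (hc.2.1 (Fin.last t)))]
          rw [heq]
          apply div_pos ?_ hS
          rw [← sum_wAg_succ hM hc k]
          exact hpos k
        have hnum : (∑ w, M.p t k (x (Fin.last (t+1))) w (hc.2.1 (Fin.last t)) * M.q t k (hc.2.2 (Fin.last t) k) w (hc.2.1 (Fin.last t)) *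
              marg M (sfCIB M t (restrictC M hc)) k w) = 0 := by
          have heq : (∑ w, M.p t k (x (Fin.last (t+1))) w (hc.2.1 (Fin.last t)) * M.q t k (hc.2.2 (Fin.last t) k) w (hc.2.1 (Fin.last t)) *
                marg M (sfCIB M t (restrictC M hc)) k w)
              = (∑ u : Fin (t+1) → M.X k, wAg M k t (restrictC M hc).2.1 (restrictC M hc).2.2 u *
                  (M.p t k (x (Fin.last (t+1))) (u (Fin.last t)) (hc.2.1 (Fin.last t)) *
                   M.q t k (hc.2.2 (Fin.last t) k) (u (Fin.last t)) (hc.2.1 (Fin.last t)))) /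
                (∑ u : Fin (t+1) → M.X k, wAg M k t (restrictC M hc).2.1 (restrictC M hc).2.2 u) := by
            calc (∑ w, M.p t k (x (Fin.last (t+1))) w (hc.2.1 (Fin.last t)) * M.q t k (hc.2.2 (Fin.last t) k) w (hc.2.1 (Fin.last t)) *
                marg M (sfCIB M t (restrictC M hc)) k w)
                = ∑ w, (∑ u : Fin (t+1) → M.X k,
                      if u (Fin.last t) = w then wAg M k t (restrictC M hc).2.1 (restrictC M hc).2.2 u else 0) *
                    (M.p t k (x (Fin.last (t+1))) w (hc.2.1 (Fin.last t)) * M.q t k (hc.2.2 (Fin.last t) k) w (hc.2.1 (Fin.last t))) /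
                    (∑ u : Fin (t+1) → M.X k, wAg M k t (restrictC M hc).2.1 (restrictC M hc).2.2 u) :=
                  Finset.sum_congr rfl fun w _ => by
                    rw [marg_sfCIB (restrictC M hc) k w hpos']; ring
              _ = (∑ w, (∑ u : Fin (t+1) → M.X k,
                      if u (Fin.last t) = w then wAg M k t (restrictC M hc).2.1 (restrictC M hc).2.2 u else 0) *
                    (M.p t k (x (Fin.last (t+1))) w (hc.2.1 (Fin.last t)) * M.q t k (hc.2.2 (Fin.last t) k) w (hc.2.1 (Fin.last t)))) /
                    (∑ u : Fin (t+1) → M.X k, wAg M k t (restrictC M hc).2.1 (restrictC M hc).2.2 u) := by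
                  rw [Finset.sum_div]
              _ = _ := by
                  rw [← sum_fiber_last (wAg M k t (restrictC M hc).2.1 (restrictC M hc).2.2)
                    (fun w => M.p t k (x (Fin.last (t+1))) w (hc.2.1 (Fin.last t)) * M.q t k (hc.2.2 (Fin.last t) k) w (hc.2.1 (Fin.last t)))]
          rw [heq, ← Wend_eq hc k (x (Fin.last (t+1))), hW0, zero_div]
        rw [(hcons k t (hc.2.2 (Fin.last t) k) (hc.2.1 (Fin.last t)) (Bsp ψ t (restrictC M hc))).2 hZ0 (x (Fin.last (t+1))) hq hnum, zero_mul]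

end MainInduction
section BeliefDef

open Finset

variable {M : Model}

/-- Common-history trajectory beliefs. -/
def muc (lam : CIBStrat M) (ψ : CIBUpdate M) (t : ℕ) (hc : CommonHist M t)
    (ξ : StateTraj M t) : ℝ :=
  ∏ k, nu lam ψ k t hc (fun s => ξ s k)

/-- The belief system of Lemma 2. -/
def muB (lam : CIBStrat M) (ψ : CIBUpdate M) : BeliefSys M := fun n t h ξ =>
  (if (fun s => ξ s n) = h.1 then (1:ℝ) else 0) *
    ∏ k ∈ univ.erase n, nu lam ψ k t h.2 (fun s => ξ s k)

lemma margTraj_muc {lam : CIBStrat M} {ψ : CIBUpdate M} (hM : M.Valid)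
    (hlam : IsCIBStrat M lam) (hψ : IsCIBUpdate M ψ) (hcons : UpdateConsistent M ψ lam)
    (t : ℕ) (hc : CommonHist M t) (k : Fin M.N) (u : Fin (t+1) → M.X k) :
    margTraj M (muc lam ψ t hc) k u = nu lam ψ k t hc u := by
  obtain ⟨-, hsum1, -, -⟩ := nu_main hM hlam hψ hcons t hc
  unfold margTraj muc
  have h1 : ∀ ξ : StateTraj M t,
      (if (fun s => ξ s k) = u then ∏ j, nu lam ψ j t hc (fun s => ξ s j) else 0)
      = (if (fun s => ξ s k) = u then nu lam ψ k t hc (fun s => ξ s k) else 0) *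
          ∏ j ∈ univ.erase k, nu lam ψ j t hc (fun s => ξ s j) := by
    intro ξ; split_ifs with h
    · rw [← Finset.mul_prod_erase univ (fun j => nu lam ψ j t hc (fun s => ξ s j)) (mem_univ k)]
    · rw [zero_mul]
  rw [Finset.sum_congr rfl fun ξ _ => h1 ξ,
    sum_traj_pin k (fun z => if z = u then nu lam ψ k t hc z else 0)
      (fun j z => nu lam ψ j t hc z),
    Finset.sum_ite_eq' univ u (nu lam ψ k t hc), if_pos (mem_univ _),
    Finset.prod_congr rfl fun j (_ : j ∈ univ.erase k) => hsum1 j,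
    Finset.prod_const_one, mul_one]

lemma muc_prob {lam : CIBStrat M} {ψ : CIBUpdate M} (hM : M.Valid)
    (hlam : IsCIBStrat M lam) (hψ : IsCIBUpdate M ψ) (hcons : UpdateConsistent M ψ lam)
    (t : ℕ) (hc : CommonHist M t) :
    (∀ ξ, 0 ≤ muc lam ψ t hc ξ) ∧ (∑ ξ, muc lam ψ t hc ξ) = 1 := by
  obtain ⟨hnn, hsum1, -, -⟩ := nu_main hM hlam hψ hcons t hc
  constructor
  · intro ξ; exact Finset.prod_nonneg fun j _ => hnn j _
  · unfold muc
    rw [sum_traj_prod (fun j z => nu lam ψ j t hc z),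
      Finset.prod_congr rfl fun j _ => hsum1 j, Finset.prod_const_one]

lemma muB_marginal_match {lam : CIBStrat M} {ψ : CIBUpdate M} (hM : M.Valid)
    (hlam : IsCIBStrat M lam) (hψ : IsCIBUpdate M ψ) (hcons : UpdateConsistent M ψ lam) :
    MarginalMatch M ψ (fun t hc => muc lam ψ t hc) := by
  intro t hc k xk
  obtain ⟨-, hsum1, hmarg, -⟩ := nu_main hM hlam hψ hcons t hc
  have h1 : ∀ ξ : StateTraj M t,
      (if ξ (Fin.last t) k = xk then muc lam ψ t hc ξ else 0)
      = (if (fun s => ξ s k) (Fin.last t) = xk then nu lam ψ k t hc (fun s => ξ s k) else 0) *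
          ∏ j ∈ univ.erase k, nu lam ψ j t hc (fun s => ξ s j) := by
    intro ξ
    unfold muc
    split_ifs with h
    · rw [← Finset.mul_prod_erase univ (fun j => nu lam ψ j t hc (fun s => ξ s j)) (mem_univ k)]
    · rw [zero_mul]
  rw [Finset.sum_congr rfl fun ξ _ => h1 ξ,
    sum_traj_pin k (fun z => if z (Fin.last t) = xk then nu lam ψ k t hc z else 0)
      (fun j z => nu lam ψ j t hc z),
    Finset.prod_congr rfl fun j (_ : j ∈ univ.erase k) => hsum1 j,
    Finset.prod_const_one, mul_one]
  exact hmarg k xk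

lemma muB_product_form {lam : CIBStrat M} {ψ : CIBUpdate M} (hM : M.Valid)
    (hlam : IsCIBStrat M lam) (hψ : IsCIBUpdate M ψ) (hcons : UpdateConsistent M ψ lam) :
    ProductForm M (muB lam ψ) (fun t hc => muc lam ψ t hc) := by
  intro n t h ξ
  unfold muB
  congr 1
  exact Finset.prod_congr rfl fun k _ =>
    (margTraj_muc hM hlam hψ hcons t h.2 k (fun s => ξ s k)).symm

lemma muB_isBelief {lam : CIBStrat M} {ψ : CIBUpdate M} (hM : M.Valid)
    (hlam : IsCIBStrat M lam) (hψ : IsCIBUpdate M ψ) (hcons : UpdateConsistent M ψ lam) :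
    IsBelief M (muB lam ψ) := by
  intro n t h
  obtain ⟨hnn, hsum1, -, -⟩ := nu_main hM hlam hψ hcons t h.2
  constructor
  · intro ξ
    exact mul_nonneg (by split_ifs <;> norm_num)
      (Finset.prod_nonneg fun j _ => hnn j _)
  · unfold muB
    rw [sum_traj_pin n (fun z => if z = h.1 then (1:ℝ) else 0)
        (fun j z => nu lam ψ j t h.2 z),
      Finset.sum_ite_eq' univ h.1 (fun _ => (1:ℝ)), if_pos (mem_univ _),
      Finset.prod_congr rfl fun j (_ : j ∈ univ.erase n) => hsum1 j,
      Finset.prod_const_one, mul_one]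

lemma muB_time_zero {lam : CIBStrat M} {ψ : CIBUpdate M}
    (n : Fin M.N) (h : PrivHist M n 0) (ξ : StateTraj M 0) :
    muB lam ψ n 0 h ξ = (if (fun s => ξ s n) = h.1 then (1:ℝ) else 0) *
      ∏ k ∈ Finset.univ.erase n, M.rhoX k (ξ (Fin.last 0) k) := by
  unfold muB
  congr 1

end BeliefDef
section NSP

open Finset

variable {M : Model}

lemma NSP_eq {lam : CIBStrat M} {ψ : CIBUpdate M} (hM : M.Valid)
    (hlam : IsCIBStrat M lam) (hψ : IsCIBUpdate M ψ) (hcons : UpdateConsistent M ψ lam)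
    (n : Fin M.N) (t : ℕ) (h : PrivHist M n t) (x' : M.X n) (a : JointA M) (y : JointY M) :
    newStateProb M (stratOf M lam ψ) (muB lam ψ) n t h x' y a
      = (M.p t n x' (h.1 (Fin.last t)) a * M.q t n (y n) (h.1 (Fin.last t)) a) *
        ∏ k ∈ univ.erase n, Zed lam ψ t h.2 k (y k) a := by
  obtain ⟨-, hsum1, hmarg, -⟩ := nu_main hM hlam hψ hcons t h.2
  unfold newStateProb
  have hz : ∀ ξ : StateTraj M t,
      (∑ z : JointX M,
        if z n = x' then oneStep M (stratOf M lam ψ) (muB lam ψ) n t h ξ z y a else 0)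
      = (muB lam ψ n t h ξ * (∏ k, M.q t k (y k) (ξ (Fin.last t) k) a) *
          ∏ k ∈ univ.erase n, stratOf M lam ψ k t (mkPriv M h.2 ξ k) (a k)) *
        M.p t n x' (ξ (Fin.last t) n) a := by
    intro ξ
    have e1 : ∀ z : JointX M,
        (if z n = x' then oneStep M (stratOf M lam ψ) (muB lam ψ) n t h ξ z y a else 0)
        = (muB lam ψ n t h ξ * (∏ k, M.q t k (y k) (ξ (Fin.last t) k) a) *
            ∏ k ∈ univ.erase n, stratOf M lam ψ k t (mkPriv M h.2 ξ k) (a k)) *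
          ((if z n = x' then M.p t n (z n) (ξ (Fin.last t) n) a else 0) *
            ∏ k ∈ univ.erase n, M.p t k (z k) (ξ (Fin.last t) k) a) := by
      intro z
      unfold oneStep
      split_ifs with hzn
      · rw [← Finset.mul_prod_erase univ (fun k => M.p t k (z k) (ξ (Fin.last t) k) a)
          (mem_univ n)]
        ring
      · rw [zero_mul, mul_zero]
    rw [Finset.sum_congr rfl fun z _ => e1 z, ← Finset.mul_sum]
    congr 1
    calc (∑ z : JointX M, (if z n = x' then M.p t n (z n) (ξ (Fin.last t) n) a else 0) *
            ∏ k ∈ univ.erase n, M.p t k (z k) (ξ (Fin.last t) k) a)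
        = (∑ v, if v = x' then M.p t n v (ξ (Fin.last t) n) a else 0) *
            ∏ k ∈ univ.erase n, ∑ v, M.p t k v (ξ (Fin.last t) k) a :=
          sum_pi_pin n (fun v => if v = x' then M.p t n v (ξ (Fin.last t) n) a else 0)
            (fun k v => M.p t k v (ξ (Fin.last t) k) a)
      _ = M.p t n x' (ξ (Fin.last t) n) a := by
          rw [Finset.sum_ite_eq' univ x' (fun v => M.p t n v (ξ (Fin.last t) n) a),
            if_pos (mem_univ _),
            Finset.prod_congr rfl (fun k (_ : k ∈ univ.erase n) =>
              Vp1 hM t k (ξ (Fin.last t) k) a),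
            Finset.prod_const_one, mul_one]
  rw [Finset.sum_congr rfl fun ξ _ => hz ξ]
  have hx : ∀ ξ : StateTraj M t,
      (muB lam ψ n t h ξ * (∏ k, M.q t k (y k) (ξ (Fin.last t) k) a) *
          ∏ k ∈ univ.erase n, stratOf M lam ψ k t (mkPriv M h.2 ξ k) (a k)) *
        M.p t n x' (ξ (Fin.last t) n) a
      = (if (fun s => ξ s n) = h.1 then
            M.p t n x' (ξ (Fin.last t) n) a * M.q t n (y n) (ξ (Fin.last t) n) a else 0) *
        ∏ k ∈ univ.erase n, (nu lam ψ k t h.2 (fun s => ξ s k) *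
          (M.q t k (y k) (ξ (Fin.last t) k) a *
           lam k t (ξ (Fin.last t) k) (Bsp ψ t h.2) (a k))) := by
    intro ξ
    have hg : ∀ k, stratOf M lam ψ k t (mkPriv M h.2 ξ k) (a k)
        = lam k t (ξ (Fin.last t) k) (Bsp ψ t h.2) (a k) := fun k => rfl
    rw [Finset.prod_congr rfl fun k (_ : k ∈ univ.erase n) => hg k]
    unfold muB
    rw [← Finset.mul_prod_erase univ (fun k => M.q t k (y k) (ξ (Fin.last t) k) a)
      (mem_univ n), Finset.prod_mul_distrib, Finset.prod_mul_distrib]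
    split_ifs with hcond
    · ring
    · ring
  rw [Finset.sum_congr rfl fun ξ _ => hx ξ]
  calc (∑ ξ : StateTraj M t,
        (if (fun s => ξ s n) = h.1 then
            M.p t n x' (ξ (Fin.last t) n) a * M.q t n (y n) (ξ (Fin.last t) n) a else 0) *
        ∏ k ∈ univ.erase n, (nu lam ψ k t h.2 (fun s => ξ s k) *
          (M.q t k (y k) (ξ (Fin.last t) k) a *
           lam k t (ξ (Fin.last t) k) (Bsp ψ t h.2) (a k))))
      = (∑ u : Fin (t+1) → M.X n, if u = h.1 then
            M.p t n x' (u (Fin.last t)) a * M.q t n (y n) (u (Fin.last t)) a else 0) *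
        ∏ k ∈ univ.erase n, ∑ u : Fin (t+1) → M.X k,
          (nu lam ψ k t h.2 u *
            (M.q t k (y k) (u (Fin.last t)) a *
             lam k t (u (Fin.last t)) (Bsp ψ t h.2) (a k))) :=
        sum_traj_pin n
          (fun u => if u = h.1 then
            M.p t n x' (u (Fin.last t)) a * M.q t n (y n) (u (Fin.last t)) a else 0)
          (fun k u => nu lam ψ k t h.2 u *
            (M.q t k (y k) (u (Fin.last t)) a *
             lam k t (u (Fin.last t)) (Bsp ψ t h.2) (a k)))
    _ = (M.p t n x' (h.1 (Fin.last t)) a * M.q t n (y n) (h.1 (Fin.last t)) a) *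
        ∏ k ∈ univ.erase n, Zed lam ψ t h.2 k (y k) a := by
        congr 1
        · rw [Finset.sum_ite_eq' univ h.1
            (fun u => M.p t n x' (u (Fin.last t)) a * M.q t n (y n) (u (Fin.last t)) a),
            if_pos (mem_univ _)]
        · refine Finset.prod_congr rfl fun k _ => ?_
          calc (∑ u : Fin (t+1) → M.X k, nu lam ψ k t h.2 u *
                (M.q t k (y k) (u (Fin.last t)) a *
                 lam k t (u (Fin.last t)) (Bsp ψ t h.2) (a k)))
              = ∑ w, (∑ u : Fin (t+1) → M.X k,
                  if u (Fin.last t) = w then nu lam ψ k t h.2 u else 0) *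
                  (M.q t k (y k) w a * lam k t w (Bsp ψ t h.2) (a k)) :=
                sum_fiber_last (nu lam ψ k t h.2)
                  (fun w => M.q t k (y k) w a * lam k t w (Bsp ψ t h.2) (a k))
            _ = Zed lam ψ t h.2 k (y k) a := by
                unfold Zed
                exact Finset.sum_congr rfl fun w _ => by rw [hmarg k w]; ring

end NSP
section DegClause

open Finset

variable {M : Model}

lemma clause_deg {lam : CIBStrat M} {ψ : CIBUpdate M} (hM : M.Valid)
    (hlam : IsCIBStrat M lam) (hψ : IsCIBUpdate M ψ) (hcons : UpdateConsistent M ψ lam)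
    (n : Fin M.N) (t : ℕ) (h : PrivHist M n t) (x' : M.X n) (c' : M.C) (a : JointA M)
    (y : JointY M) (ζ : StateTraj M (t+1))
    (hsum : 0 < ∑ ζ' : StateTraj M (t+1), sfPrivUn M n (t+1) (extendPriv M h x' c' a y) ζ')
    (hz : sfPrivUn M n (t+1) (extendPriv M h x' c' a y) ζ = 0) :
    muB lam ψ n (t+1) (extendPriv M h x' c' a y) ζ = 0 := by
  have h1 : ∀ ζ' : StateTraj M (t+1), sfPrivUn M n (t+1) (extendPriv M h x' c' a y) ζ'
      = (if (fun s => ζ' s n) = (extendPriv M h x' c' a y).1 then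
          wAg M n (t+1) (extendPriv M h x' c' a y).2.2.1 (extendPriv M h x' c' a y).2.2.2
            (fun s => ζ' s n) else 0) *
        ∏ k ∈ univ.erase n,
          wAg M k (t+1) (extendPriv M h x' c' a y).2.2.1 (extendPriv M h x' c' a y).2.2.2
            (fun s => ζ' s k) := by
    intro ζ'
    unfold sfPrivUn
    rw [sfWeight_eq_prod]
    split_ifs with hcond
    · rw [← Finset.mul_prod_erase univ
        (fun k => wAg M k (t+1) (extendPriv M h x' c' a y).2.2.1
          (extendPriv M h x' c' a y).2.2.2 (fun s => ζ' s k)) (mem_univ n)]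
    · rw [zero_mul]
  rw [Finset.sum_congr rfl fun ζ' _ => h1 ζ',
    sum_traj_pin n
      (fun u => if u = (extendPriv M h x' c' a y).1 then
        wAg M n (t+1) (extendPriv M h x' c' a y).2.2.1 (extendPriv M h x' c' a y).2.2.2 u
        else 0)
      (fun k u => wAg M k (t+1) (extendPriv M h x' c' a y).2.2.1
        (extendPriv M h x' c' a y).2.2.2 u),
    Finset.sum_ite_eq' univ (extendPriv M h x' c' a y).1
      (fun u => wAg M n (t+1) (extendPriv M h x' c' a y).2.2.1
        (extendPriv M h x' c' a y).2.2.2 u),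
    if_pos (mem_univ _)] at hsum
  have hwn : 0 < wAg M n (t+1) (extendPriv M h x' c' a y).2.2.1
      (extendPriv M h x' c' a y).2.2.2 (extendPriv M h x' c' a y).1 := by
    rcases (wAg_nonneg hM (extendPriv M h x' c' a y).2.2.1 (extendPriv M h x' c' a y).2.2.2
      (extendPriv M h x' c' a y).1).lt_or_eq with hlt | heq
    · exact hlt
    · rw [← heq, zero_mul] at hsum; exact absurd hsum (lt_irrefl 0)
  have hsk : ∀ k ∈ univ.erase n, 0 < ∑ u : Fin (t+2) → M.X k,
      wAg M k (t+1) (extendPriv M h x' c' a y).2.2.1 (extendPriv M h x' c' a y).2.2.2 u := by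
    intro k hk
    rcases (Finset.sum_nonneg fun u _ => wAg_nonneg hM _ _ u).lt_or_eq with hlt | heq
    · exact hlt
    · exfalso
      rw [Finset.prod_eq_zero hk heq.symm, mul_zero] at hsum
      exact absurd hsum (lt_irrefl 0)
  have hall : ∀ j, 0 < ∑ u : Fin (t+2) → M.X j,
      wAg M j (t+1) (extendPriv M h x' c' a y).2.2.1 (extendPriv M h x' c' a y).2.2.2 u := by
    intro j
    by_cases hj : j = n
    · subst hj
      exact lt_of_lt_of_le hwn (Finset.single_le_sum
        (fun u _ => wAg_nonneg hM _ _ u) (mem_univ _))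
    · exact hsk j (Finset.mem_erase.2 ⟨hj, mem_univ _⟩)
  obtain ⟨-, -, -, hsupp⟩ := nu_main hM hlam hψ hcons (t+1) (extendPriv M h x' c' a y).2
  unfold muB
  by_cases hcond : (fun s => ζ s n) = (extendPriv M h x' c' a y).1
  · rw [if_pos hcond, one_mul]
    unfold sfPrivUn at hz
    rw [if_pos hcond, sfWeight_eq_prod] at hz
    obtain ⟨j, -, hj0⟩ := Finset.prod_eq_zero_iff.1 hz
    by_cases hjn : j = n
    · exfalso
      subst hjn
      rw [hcond] at hj0
      exact absurd hj0 (ne_of_gt hwn)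
    · exact Finset.prod_eq_zero (Finset.mem_erase.2 ⟨hjn, mem_univ _⟩)
        (hsupp hall j _ hj0)
  · rw [if_neg hcond, zero_mul]

end DegClause
section BayesClause

open Finset

variable {M : Model}

lemma clause_bayes {lam : CIBStrat M} {ψ : CIBUpdate M} (hM : M.Valid)
    (hlam : IsCIBStrat M lam) (hψ : IsCIBUpdate M ψ) (hcons : UpdateConsistent M ψ lam)
    (n : Fin M.N) (t : ℕ) (h : PrivHist M n t) (x' : M.X n) (c' : M.C) (a : JointA M)
    (y : JointY M)
    (hpos : 0 < newStateProb M (stratOf M lam ψ) (muB lam ψ) n t h x' y a)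
    (ζ : StateTraj M (t+1)) :
    muB lam ψ n (t+1) (extendPriv M h x' c' a y) ζ =
      (if ζ (Fin.last (t+1)) n = x' then (1:ℝ) else 0) *
        (oneStep M (stratOf M lam ψ) (muB lam ψ) n t h (fun s => ζ s.castSucc)
            (ζ (Fin.last (t+1))) y a /
          newStateProb M (stratOf M lam ψ) (muB lam ψ) n t h x' y a) := by
  rw [NSP_eq hM hlam hψ hcons n t h x' a y] at hpos
  rw [NSP_eq hM hlam hψ hcons n t h x' a y]
  have hpq : 0 < M.p t n x' (h.1 (Fin.last t)) a * M.q t n (y n) (h.1 (Fin.last t)) a := by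
    rcases (mul_nonneg (Vp0 hM t n x' (h.1 (Fin.last t)) a)
      (Vq0 hM t n (y n) (h.1 (Fin.last t)) a)).lt_or_eq with hlt | heq
    · exact hlt
    · rw [← heq, zero_mul] at hpos; exact absurd hpos (lt_irrefl 0)
  have hZk : ∀ k ∈ univ.erase n, 0 < Zed lam ψ t h.2 k (y k) a := by
    intro k hk
    rcases (Zed_nonneg hM hlam hψ t h.2 k (y k) a).lt_or_eq with hlt | heq
    · exact hlt
    · exfalso
      rw [Finset.prod_eq_zero hk heq.symm, mul_zero] at hpos
      exact absurd hpos (lt_irrefl 0)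
  have hZprod : 0 < ∏ k ∈ univ.erase n, Zed lam ψ t h.2 k (y k) a := Finset.prod_pos hZk
  by_cases hlast : ζ (Fin.last (t+1)) n = x'
  · by_cases hinit : (fun s : Fin (t+1) => ζ s.castSucc n) = h.1
    · -- main case
      have hyes : (fun s => ζ s n) = (extendPriv M h x' c' a y).1 := by
        funext s
        refine Fin.lastCases ?_ (fun i => ?_) s
        · exact hlast.trans (Fin.snoc_last (α := fun _ => M.X n) x' h.1).symm
        · exact (congrFun hinit i).trans (Fin.snoc_castSucc (α := fun _ => M.X n) x' h.1 i).symm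
      have hcs : ζ ((Fin.last t).castSucc) n = h.1 (Fin.last t) := congrFun hinit (Fin.last t)
      have F1 : restrictC M (extendPriv M h x' c' a y).2 = h.2 := by
        refine Prod.ext ?_ (Prod.ext ?_ ?_)
        · exact funext fun s => Fin.snoc_castSucc (α := fun _ => M.C) c' h.2.1 s
        · exact funext fun s => Fin.snoc_castSucc (α := fun _ => JointA M) a h.2.2.1 s
        · exact funext fun s => Fin.snoc_castSucc (α := fun _ => JointY M) y h.2.2.2 s
      have F2 : (extendPriv M h x' c' a y).2.2.1 (Fin.last t) = a :=
        Fin.snoc_last (α := fun _ => JointA M) a h.2.2.1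
      have F3 : (extendPriv M h x' c' a y).2.2.2 (Fin.last t) = y :=
        Fin.snoc_last (α := fun _ => JointY M) y h.2.2.2
      have hnuk : ∀ k ∈ univ.erase n,
          nu lam ψ k (t+1) (extendPriv M h x' c' a y).2 (fun s => ζ s k)
          = nu lam ψ k t h.2 (fun s => ζ s.castSucc k) *
            (M.p t k (ζ (Fin.last (t+1)) k) (ζ ((Fin.last t).castSucc) k) a *
             M.q t k (y k) (ζ ((Fin.last t).castSucc) k) a *
             lam k t (ζ ((Fin.last t).castSucc) k) (Bsp ψ t h.2) (a k)) /
            Zed lam ψ t h.2 k (y k) a := by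
        intro k hk
        rw [nu_succ, F1, F2, F3, if_pos (hZk k hk)]
      have hL : muB lam ψ n (t+1) (extendPriv M h x' c' a y) ζ
          = ∏ k ∈ univ.erase n, (nu lam ψ k t h.2 (fun s => ζ s.castSucc k) *
            (M.p t k (ζ (Fin.last (t+1)) k) (ζ ((Fin.last t).castSucc) k) a *
             M.q t k (y k) (ζ ((Fin.last t).castSucc) k) a *
             lam k t (ζ ((Fin.last t).castSucc) k) (Bsp ψ t h.2) (a k)) /
            Zed lam ψ t h.2 k (y k) a) := by
        unfold muB
        rw [if_pos hyes, one_mul]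
        exact Finset.prod_congr rfl hnuk
      have hmu1 : muB lam ψ n t h (fun s => ζ s.castSucc)
          = ∏ k ∈ univ.erase n, nu lam ψ k t h.2 (fun s => ζ s.castSucc k) := by
        unfold muB
        rw [if_pos hinit, one_mul]
      have hg : ∀ k, stratOf M lam ψ k t (mkPriv M h.2 (fun s => ζ s.castSucc) k) (a k)
          = lam k t (ζ ((Fin.last t).castSucc) k) (Bsp ψ t h.2) (a k) := fun k => rfl
      have hR : oneStep M (stratOf M lam ψ) (muB lam ψ) n t h (fun s => ζ s.castSucc)
            (ζ (Fin.last (t+1))) y a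
          = (∏ k ∈ univ.erase n, nu lam ψ k t h.2 (fun s => ζ s.castSucc k)) *
            (M.p t n x' (h.1 (Fin.last t)) a * ∏ k ∈ univ.erase n,
              M.p t k (ζ (Fin.last (t+1)) k) (ζ ((Fin.last t).castSucc) k) a) *
            (M.q t n (y n) (h.1 (Fin.last t)) a * ∏ k ∈ univ.erase n,
              M.q t k (y k) (ζ ((Fin.last t).castSucc) k) a) *
            (∏ k ∈ univ.erase n,
              lam k t (ζ ((Fin.last t).castSucc) k) (Bsp ψ t h.2) (a k)) := by
        simp only [oneStep]
        rw [hmu1, Finset.prod_congr rfl fun k (_ : k ∈ univ.erase n) => hg k,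
          ← Finset.mul_prod_erase univ
            (fun k => M.p t k (ζ (Fin.last (t+1)) k) (ζ ((Fin.last t).castSucc) k) a)
            (mem_univ n),
          ← Finset.mul_prod_erase univ
            (fun k => M.q t k (y k) (ζ ((Fin.last t).castSucc) k) a) (mem_univ n),
          hlast, hcs]
      rw [if_pos hlast, one_mul, hL, hR]
      rw [Finset.prod_div_distrib, Finset.prod_mul_distrib, Finset.prod_mul_distrib,
        Finset.prod_mul_distrib]
      rw [div_eq_div_iff (ne_of_gt hZprod) (ne_of_gt (mul_pos hpq hZprod))]
      ring
    · -- initial segment mismatch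
      have hne : ¬((fun s => ζ s n) = (extendPriv M h x' c' a y).1) := by
        intro he
        exact hinit (funext fun s => (congrFun he s.castSucc).trans
          (Fin.snoc_castSucc (α := fun _ => M.X n) x' h.1 s))
      have hmu0 : muB lam ψ n t h (fun s => ζ s.castSucc) = 0 := by
        unfold muB
        rw [if_neg hinit, zero_mul]
      have hL : muB lam ψ n (t+1) (extendPriv M h x' c' a y) ζ = 0 := by
        unfold muB
        rw [if_neg hne, zero_mul]
      have hR : oneStep M (stratOf M lam ψ) (muB lam ψ) n t h (fun s => ζ s.castSucc)
          (ζ (Fin.last (t+1))) y a = 0 := by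
        simp only [oneStep]
        rw [hmu0, zero_mul, zero_mul, zero_mul]
      rw [hL, hR, zero_div, mul_zero]
  · -- last state mismatch
    rw [if_neg hlast, zero_mul]
    have hne : ¬((fun s => ζ s n) = (extendPriv M h x' c' a y).1) := by
      intro he
      exact hlast ((congrFun he (Fin.last (t+1))).trans
        (Fin.snoc_last (α := fun _ => M.X n) x' h.1))
    unfold muB
    rw [if_neg hne, zero_mul]

end BayesClause
/-- Lemma 2: if `λ` is a CIB strategy profile and `ψ` a CIB update rule
consistent with `λ`, then there exists a pair `(g, μ) = f(λ, ψ)` with `g = stratOf λ ψ`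
and `μ` a belief system consistent with `g` such that `μ` has the product form
`μⁿ_t(hⁿ_t)(x_{1:t}) = 1{xⁿ_{1:t} matches hⁿ_t}·∏_{k≠n} μ^c_t(h^c_t)(x^k_{1:t})` for some
common-history maps `μ^c_t : H^c_t → Δ(𝒳_{1:t})` whose time-`t` marginals agree with the
CIB beliefs `γ_{ψ,t}`. -/
theorem stmt_2 (M : Model) (hM : M.Valid)
    (lam : CIBStrat M) (ψ : CIBUpdate M)
    (hlam : IsCIBStrat M lam) (hψ : IsCIBUpdate M ψ)
    (hcons : UpdateConsistent M ψ lam) :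
    ∃ (μ : BeliefSys M) (μc : ∀ t : ℕ, CommonHist M t → StateTraj M t → ℝ),
      (∀ t h, (∀ ξ, 0 ≤ μc t h ξ) ∧ (∑ ξ, μc t h ξ) = 1) ∧
      Consistent M (stratOf M lam ψ) μ ∧
      ProductForm M μ μc ∧
      MarginalMatch M ψ μc := by
  refine ⟨muB lam ψ, fun t hc => muc lam ψ t hc,
    fun t h => muc_prob hM hlam hψ hcons t h,
    ⟨muB_isBelief hM hlam hψ hcons, fun n h ξ => muB_time_zero n h ξ, ?_⟩,
    muB_product_form hM hlam hψ hcons, muB_marginal_match hM hlam hψ hcons⟩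
  intro n t h x' c' a y
  exact ⟨fun hpos ζ => clause_bayes hM hlam hψ hcons n t h x' c' a y hpos ζ,
    fun _ ζ hs hz => clause_deg hM hlam hψ hcons n t h x' c' a y ζ hs hz⟩

end CIBGame
end
end

section
/- Suppose λ is a CIB strategy profile and ψ is a CIB update rule consistent with λ, and let (g, μ) = f(λ, ψ) be the induced behavioral strategy profile and consistent belief system. If every agent k ≠ n uses the strategy g^k, then for any behavioral strategy g'^n of agent n and any history h^n_t with P^{(g'^n, g^{-n})}(h^n_t) > 0, the conditional distribution of the state trajectories satisfies P^{(g'^n, g^{-n})}(X_{1:t}=x_{1:t} | h^n_t) = μ^n_t(h^n_t)(x_{1:t}) = 1{x^n_{1:t} equals the private trajectory in h^n_t} · ∏_{k≠n} μ^c_t(h^c_t)(x^k_{1:t}) for all x_{1:t}; in particular, agent n's belief about the other agents' local-state trajectories depends only on the common history h^c_t and not on agent n's own strategy. -/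
open Finset

noncomputable section

namespace CIBGame

/-! ### Auxiliary lemmas for Statement 4 -/

section Stmt4Aux

variable {M : Model}

lemma snoc_lt {α : Type*} {m : ℕ} (u : Fin m → α) (v : α) (i : ℕ)
    (h1 : i < m + 1) (h2 : i < m) :
    (Fin.snoc u v : Fin (m+1) → α) ⟨i, h1⟩ = u ⟨i, h2⟩ := by
  have : (⟨i, h1⟩ : Fin (m+1)) = Fin.castSucc ⟨i, h2⟩ := rfl
  rw [this, Fin.snoc_castSucc]

lemma snoc_top {α : Type*} {m : ℕ} (u : Fin m → α) (v : α)
    (h1 : m < m + 1) : (Fin.snoc u v : Fin (m+1) → α) ⟨m, h1⟩ = v := by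
  have : (⟨m, h1⟩ : Fin (m+1)) = Fin.last m := rfl
  rw [this, Fin.snoc_last]

lemma snoc_eq_snoc_iff {α : Type*} {m : ℕ} {u w : Fin m → α} {v z : α} :
    (Fin.snoc u v : Fin (m+1) → α) = Fin.snoc w z ↔ u = w ∧ v = z := by
  constructor
  · intro e
    constructor
    · have := congrArg Fin.init e
      rwa [Fin.init_snoc, Fin.init_snoc] at this
    · have := congrFun e (Fin.last m)
      rwa [Fin.snoc_last, Fin.snoc_last] at this
  · rintro ⟨rfl, rfl⟩; rfl

lemma sum_pi_cond {ι : Type*} [Fintype ι] [DecidableEq ι] {X : ι → Type*}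
    [∀ i, Fintype (X i)] [∀ i, DecidableEq (X i)] (F : ∀ i, X i → ℝ) (n : ι) (x₀ : X n) :
    ∑ z : (∀ i, X i), (if z n = x₀ then ∏ k, F k (z k) else 0)
      = F n x₀ * ∏ k ∈ Finset.univ.erase n, ∑ x, F k x := by
  classical
  set G : ∀ i, X i → ℝ := Function.update F n (fun x => if x = x₀ then F n x else 0) with hG
  have hGn : G n = fun x => if x = x₀ then F n x else 0 := Function.update_self _ _ _
  have hGk : ∀ k, k ≠ n → G k = F k := fun k hk => Function.update_of_ne hk _ _
  have h1 : ∀ z : ∀ i, X i,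
      (if z n = x₀ then ∏ k, F k (z k) else 0) = ∏ k, G k (z k) := by
    intro z
    rw [← Finset.mul_prod_erase Finset.univ (fun k => G k (z k)) (Finset.mem_univ n)]
    have he : ∏ k ∈ Finset.univ.erase n, G k (z k)
        = ∏ k ∈ Finset.univ.erase n, F k (z k) :=
      Finset.prod_congr rfl fun k hk => by rw [hGk k (Finset.mem_erase.1 hk).1]
    rw [he, hGn]
    by_cases hz : z n = x₀
    · simp only [hz, if_true]
      rw [← Finset.mul_prod_erase Finset.univ (fun k => F k (z k)) (Finset.mem_univ n), hz]
    · simp [hz]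
  calc ∑ z : (∀ i, X i), (if z n = x₀ then ∏ k, F k (z k) else 0)
      = ∑ z : (∀ i, X i), ∏ k, G k (z k) := Finset.sum_congr rfl fun z _ => h1 z
    _ = ∏ k, ∑ x, G k x := (Fintype.prod_sum G).symm
    _ = (∑ x, G n x) * ∏ k ∈ Finset.univ.erase n, ∑ x, G k x :=
        (Finset.mul_prod_erase Finset.univ (fun k => ∑ x, G k x) (Finset.mem_univ n)).symm
    _ = F n x₀ * ∏ k ∈ Finset.univ.erase n, ∑ x, F k x := by
        congr 1
        · rw [hGn]; simp
        · exact Finset.prod_congr rfl fun k hk => by rw [hGk k (Finset.mem_erase.1 hk).1]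

lemma sum_snoc_fn {β : Type*} [Fintype β] {t : ℕ} (F : (Fin (t+2) → β) → ℝ) :
    ∑ ζ : Fin (t+2) → β, F ζ = ∑ ξ : Fin (t+1) → β, ∑ z : β, F (Fin.snoc ξ z) := by
  have e1 : ∑ ζ : Fin (t+2) → β, F ζ
      = ∑ p : β × (Fin (t+1) → β), F (Fin.snoc p.2 p.1) :=
    (Fintype.sum_equiv (Fin.snocEquiv (fun _ => β)) (fun p => F (Fin.snoc p.2 p.1)) F
      (fun p => rfl)).symm
  rw [e1, Fintype.sum_prod_type, Finset.sum_comm]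

/-- The canonical (unique) full-trajectory weight compatible with a private history and
a state trajectory. -/
def Ncan (M : Model) (g : Strat M) (n : Fin M.N) (t : ℕ) (h : PrivHist M n t)
    (ξ : StateTraj M t) : ℝ :=
  if (fun s => ξ s n) = h.1 then trajProb M g t (h.2.1, ξ, h.2.2.1, h.2.2.2) else 0

lemma trajProb_nonneg (hM : M.Valid) (g : Strat M) (hg : IsStrat M g) (t : ℕ)
    (f : FullTraj M t) : 0 ≤ trajProb M g t f := by
  obtain ⟨h1, -, h3, -, h5, -, h7, -, h9, -⟩ := hM
  refine mul_nonneg (mul_nonneg (h1 _) (Finset.prod_nonneg fun k _ => h3 _ _))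
    (Finset.prod_nonneg fun s _ => ?_)
  refine mul_nonneg (mul_nonneg (mul_nonneg ?_ (h5 _ _ _ _)) ?_) ?_
  · exact Finset.prod_nonneg fun k _ => (hg k _ _).1 _
  · exact Finset.prod_nonneg fun k _ => h7 _ _ _ _ _
  · exact Finset.prod_nonneg fun k _ => h9 _ _ _ _ _

lemma Ncan_nonneg (hM : M.Valid) (g : Strat M) (hg : IsStrat M g) (n : Fin M.N) (t : ℕ)
    (h : PrivHist M n t) (ξ : StateTraj M t) : 0 ≤ Ncan M g n t h ξ := by
  unfold Ncan; split
  · exact trajProb_nonneg hM g hg t _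
  · exact le_refl 0

lemma numer_eq (g : Strat M) (n : Fin M.N) (t : ℕ) (h : PrivHist M n t)
    (ξ : StateTraj M t) :
    (∑ f : FullTraj M t, if currPriv M f n = h ∧ f.2.1 = ξ then trajProb M g t f else 0)
      = Ncan M g n t h ξ := by
  classical
  rw [Finset.sum_eq_single_of_mem ((h.2.1, ξ, h.2.2.1, h.2.2.2) : FullTraj M t)
    (Finset.mem_univ _)]
  · unfold Ncan currPriv commonOf
    by_cases hc : (fun s => ξ s n) = h.1
    · have : ((fun s => ξ s n, (h.2.1, h.2.2.1, h.2.2.2)) : PrivHist M n t) = h := by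
        rw [hc]
      simp [this, hc]
    · have : ((fun s => ξ s n, (h.2.1, h.2.2.1, h.2.2.2)) : PrivHist M n t) ≠ h := by
        intro e
        exact hc (congrArg Prod.fst e)
      simp [this, hc]
  · intro f _ hf
    rw [if_neg]
    rintro ⟨e1, e2⟩
    apply hf
    unfold currPriv commonOf at e1
    have h1 : f.1 = h.2.1 := congrArg (fun p => p.2.1) e1
    have h2 : f.2.2.1 = h.2.2.1 := congrArg (fun p => p.2.2.1) e1
    have h3 : f.2.2.2 = h.2.2.2 := congrArg (fun p => p.2.2.2) e1
    calc f = (f.1, f.2.1, f.2.2.1, f.2.2.2) := rfl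
      _ = (h.2.1, ξ, h.2.2.1, h.2.2.2) := by rw [h1, h2, h3, e2]

lemma privHistProb_eq (g : Strat M) (n : Fin M.N) (t : ℕ) (h : PrivHist M n t) :
    privHistProb M g n t h = ∑ ξ : StateTraj M t, Ncan M g n t h ξ := by
  classical
  have : ∀ f : FullTraj M t,
      (if currPriv M f n = h then trajProb M g t f else 0)
        = ∑ ξ : StateTraj M t,
            (if currPriv M f n = h ∧ f.2.1 = ξ then trajProb M g t f else 0) := by
    intro f
    by_cases hc : currPriv M f n = h
    · simp only [hc, true_and]
      rw [Finset.sum_ite_eq Finset.univ f.2.1 (fun _ => trajProb M g t f)]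
      simp
    · simp [hc]
  unfold privHistProb
  rw [Finset.sum_congr rfl fun f _ => this f, Finset.sum_comm]
  exact Finset.sum_congr rfl fun ξ _ => numer_eq g n t h ξ

lemma histAt_castSucc {t : ℕ} (f : FullTraj M t) (a : JointA M) (y : JointY M)
    (c' : M.C) (z : JointX M) (s : Fin t) (m : Fin M.N) :
    histAt M (extendFull M f a y c' z) (Fin.castSucc s) m = histAt M f s m := by
  have hs := s.isLt
  unfold histAt extendFull
  simp only [Prod.mk.injEq]
  refine ⟨?_, ?_, ?_, ?_⟩
  · funext r
    have hr : r.1 < s.1 + 1 := r.isLt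
    exact congrFun (snoc_lt f.2.1 z r.1 (by omega) (by omega)) m
  · funext r
    have hr : r.1 < s.1 + 1 := r.isLt
    exact snoc_lt f.1 c' r.1 (by omega) (by omega)
  · funext r
    have hr : r.1 < s.1 := r.isLt
    exact snoc_lt f.2.2.1 a r.1 (by omega) (by omega)
  · funext r
    have hr : r.1 < s.1 := r.isLt
    exact snoc_lt f.2.2.2 y r.1 (by omega) (by omega)

lemma histAt_last {t : ℕ} (f : FullTraj M t) (a : JointA M) (y : JointY M)
    (c' : M.C) (z : JointX M) (m : Fin M.N) :
    histAt M (extendFull M f a y c' z) (Fin.last t) m = currPriv M f m := by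
  unfold histAt extendFull currPriv commonOf
  simp only [Prod.mk.injEq]
  refine ⟨?_, ?_, ?_, ?_⟩
  · funext r
    have hr := r.isLt
    exact congrFun (snoc_lt f.2.1 z r.1 (by omega) hr) m
  · funext r
    have hr := r.isLt
    exact snoc_lt f.1 c' r.1 (by omega) hr
  · funext r
    have hr := r.isLt
    exact snoc_lt f.2.2.1 a r.1 (by omega) hr
  · funext r
    have hr := r.isLt
    exact snoc_lt f.2.2.2 y r.1 (by omega) hr

lemma trajProb_snoc (g : Strat M) (t : ℕ) (f : FullTraj M t) (a : JointA M)
    (y : JointY M) (c' : M.C) (z : JointX M) :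
    trajProb M g (t+1) (extendFull M f a y c' z) =
      trajProb M g t f *
        ((∏ m, g m t (currPriv M f m) (a m)) *
          (M.pC t c' (f.1 (Fin.last t)) a *
            ((∏ m, M.p t m (z m) (f.2.1 (Fin.last t) m) a) *
              (∏ m, M.q t m (y m) (f.2.1 (Fin.last t) m) a)))) := by
  unfold trajProb
  rw [Fin.prod_univ_castSucc]
  have hA : M.rhoC ((extendFull M f a y c' z).1 ⟨0, Nat.succ_pos (t+1)⟩)
      = M.rhoC (f.1 ⟨0, Nat.succ_pos t⟩) :=
    congrArg M.rhoC (snoc_lt f.1 c' 0 (Nat.succ_pos (t+1)) (Nat.succ_pos t))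
  have hB : (∏ m, M.rhoX m ((extendFull M f a y c' z).2.1 ⟨0, Nat.succ_pos (t+1)⟩ m))
      = ∏ m, M.rhoX m (f.2.1 ⟨0, Nat.succ_pos t⟩ m) :=
    Finset.prod_congr rfl fun m _ => congrArg (M.rhoX m)
      (congrFun (snoc_lt f.2.1 z 0 (Nat.succ_pos (t+1)) (Nat.succ_pos t)) m)
  rw [hA, hB]
  have hlast : ((∏ m, g m (Fin.last t).1
          (histAt M (extendFull M f a y c' z) (Fin.last t) m)
          ((extendFull M f a y c' z).2.2.1 (Fin.last t) m)) *
        M.pC (Fin.last t).1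
          ((extendFull M f a y c' z).1 ⟨(Fin.last t).1 + 1, by have h2 := (Fin.last t).isLt; omega⟩)
          ((extendFull M f a y c' z).1 ⟨(Fin.last t).1, by have h2 := (Fin.last t).isLt; omega⟩)
          ((extendFull M f a y c' z).2.2.1 (Fin.last t)) *
        (∏ m, M.p (Fin.last t).1 m
          ((extendFull M f a y c' z).2.1 ⟨(Fin.last t).1 + 1, by have h2 := (Fin.last t).isLt; omega⟩ m)
          ((extendFull M f a y c' z).2.1 ⟨(Fin.last t).1, by have h2 := (Fin.last t).isLt; omega⟩ m)
          ((extendFull M f a y c' z).2.2.1 (Fin.last t))) *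
        (∏ m, M.q (Fin.last t).1 m
          ((extendFull M f a y c' z).2.2.2 (Fin.last t) m)
          ((extendFull M f a y c' z).2.1 ⟨(Fin.last t).1, by have h2 := (Fin.last t).isLt; omega⟩ m)
          ((extendFull M f a y c' z).2.2.1 (Fin.last t))))
      = (∏ m, g m t (currPriv M f m) (a m)) *
          M.pC t c' (f.1 (Fin.last t)) a *
          (∏ m, M.p t m (z m) (f.2.1 (Fin.last t) m) a) *
          (∏ m, M.q t m (y m) (f.2.1 (Fin.last t) m) a) := by
    have hAct : (extendFull M f a y c' z).2.2.1 (Fin.last t) = a := by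
      show (Fin.snoc f.2.2.1 a : Fin (t+1) → JointA M) (Fin.last t) = a
      rw [Fin.snoc_last]
    have hObs : (extendFull M f a y c' z).2.2.2 (Fin.last t) = y := by
      show (Fin.snoc f.2.2.2 y : Fin (t+1) → JointY M) (Fin.last t) = y
      rw [Fin.snoc_last]
    have hCtop : ∀ pf, (extendFull M f a y c' z).1 ⟨(Fin.last t).1 + 1, pf⟩ = c' :=
      fun pf => snoc_top f.1 c' pf
    have hClt : ∀ pf, (extendFull M f a y c' z).1 ⟨(Fin.last t).1, pf⟩ = f.1 (Fin.last t) :=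
      fun pf => snoc_lt f.1 c' t pf (Nat.lt_succ_self t)
    have hXtop : ∀ pf, (extendFull M f a y c' z).2.1 ⟨(Fin.last t).1 + 1, pf⟩ = z :=
      fun pf => snoc_top f.2.1 z pf
    have hXlt : ∀ pf, (extendFull M f a y c' z).2.1 ⟨(Fin.last t).1, pf⟩ = f.2.1 (Fin.last t) :=
      fun pf => snoc_lt f.2.1 z t pf (Nat.lt_succ_self t)
    congr 1
    · congr 1
      · congr 1
        · exact Finset.prod_congr rfl fun m _ =>
            congrArg₂ (g m t) (congrArg₂ Prod.mk
                (congrArg (fun w : PrivHist M m t => w.1) (histAt_last f a y c' z m))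
                (congrArg (fun w : PrivHist M m t => w.2) (histAt_last f a y c' z m)))
              (congrFun hAct m)
        · rw [hCtop, hClt, hAct, Fin.val_last]
      · exact Finset.prod_congr rfl fun m _ => by rw [hXtop, hXlt, hAct, Fin.val_last]
    · exact Finset.prod_congr rfl fun m _ => by rw [hObs, hXlt, hAct, Fin.val_last]
  have hmid : (∏ s : Fin t,
        ((∏ m, g m (Fin.castSucc s).1
            (histAt M (extendFull M f a y c' z) (Fin.castSucc s) m)
            ((extendFull M f a y c' z).2.2.1 (Fin.castSucc s) m)) *
          M.pC (Fin.castSucc s).1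
            ((extendFull M f a y c' z).1 ⟨(Fin.castSucc s).1 + 1, by have h2 := (Fin.castSucc s).isLt; omega⟩)
            ((extendFull M f a y c' z).1 ⟨(Fin.castSucc s).1, by have h2 := (Fin.castSucc s).isLt; omega⟩)
            ((extendFull M f a y c' z).2.2.1 (Fin.castSucc s)) *
          (∏ m, M.p (Fin.castSucc s).1 m
            ((extendFull M f a y c' z).2.1 ⟨(Fin.castSucc s).1 + 1, by have h2 := (Fin.castSucc s).isLt; omega⟩ m)
            ((extendFull M f a y c' z).2.1 ⟨(Fin.castSucc s).1, by have h2 := (Fin.castSucc s).isLt; omega⟩ m)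
            ((extendFull M f a y c' z).2.2.1 (Fin.castSucc s))) *
          (∏ m, M.q (Fin.castSucc s).1 m
            ((extendFull M f a y c' z).2.2.2 (Fin.castSucc s) m)
            ((extendFull M f a y c' z).2.1 ⟨(Fin.castSucc s).1, by have h2 := (Fin.castSucc s).isLt; omega⟩ m)
            ((extendFull M f a y c' z).2.2.1 (Fin.castSucc s)))))
      = ∏ s : Fin t,
          ((∏ m, g m s.1 (histAt M f s m) (f.2.2.1 s m)) *
            M.pC s.1 (f.1 ⟨s.1 + 1, by have h2 := s.isLt; omega⟩)
              (f.1 ⟨s.1, by have h2 := s.isLt; omega⟩) (f.2.2.1 s) *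
            (∏ m, M.p s.1 m (f.2.1 ⟨s.1 + 1, by have h2 := s.isLt; omega⟩ m)
              (f.2.1 ⟨s.1, by have h2 := s.isLt; omega⟩ m) (f.2.2.1 s)) *
            (∏ m, M.q s.1 m (f.2.2.2 s m)
              (f.2.1 ⟨s.1, by have h2 := s.isLt; omega⟩ m) (f.2.2.1 s))) := by
    refine Finset.prod_congr rfl fun s _ => ?_
    have hs := s.isLt
    have hAct : (extendFull M f a y c' z).2.2.1 (Fin.castSucc s) = f.2.2.1 s := by
      show (Fin.snoc f.2.2.1 a : Fin (t+1) → JointA M) (Fin.castSucc s) = f.2.2.1 s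
      rw [Fin.snoc_castSucc]
    have hObs : (extendFull M f a y c' z).2.2.2 (Fin.castSucc s) = f.2.2.2 s := by
      show (Fin.snoc f.2.2.2 y : Fin (t+1) → JointY M) (Fin.castSucc s) = f.2.2.2 s
      rw [Fin.snoc_castSucc]
    have hC1 : ∀ pf, (extendFull M f a y c' z).1 ⟨(Fin.castSucc s).1 + 1, pf⟩
        = f.1 ⟨s.1 + 1, by omega⟩ :=
      fun pf => snoc_lt f.1 c' (s.1+1) pf (by omega)
    have hC0 : ∀ pf, (extendFull M f a y c' z).1 ⟨(Fin.castSucc s).1, pf⟩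
        = f.1 ⟨s.1, by omega⟩ :=
      fun pf => snoc_lt f.1 c' s.1 pf (by omega)
    have hX1 : ∀ pf, (extendFull M f a y c' z).2.1 ⟨(Fin.castSucc s).1 + 1, pf⟩
        = f.2.1 ⟨s.1 + 1, by omega⟩ :=
      fun pf => snoc_lt f.2.1 z (s.1+1) pf (by omega)
    have hX0 : ∀ pf, (extendFull M f a y c' z).2.1 ⟨(Fin.castSucc s).1, pf⟩
        = f.2.1 ⟨s.1, by omega⟩ :=
      fun pf => snoc_lt f.2.1 z s.1 pf (by omega)
    congr 1
    · congr 1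
      · congr 1
        · exact Finset.prod_congr rfl fun m _ =>
            congrArg₂ (g m s.1) (congrArg₂ Prod.mk
                (congrArg (fun w : PrivHist M m s.1 => w.1) (histAt_castSucc f a y c' z s m))
                (congrArg (fun w : PrivHist M m s.1 => w.2) (histAt_castSucc f a y c' z s m)))
              (congrFun hAct m)
        · rw [hC1, hC0, hAct, Fin.coe_castSucc]
      · exact Finset.prod_congr rfl fun m _ => by rw [hX1, hX0, hAct, Fin.coe_castSucc]
    · exact Finset.prod_congr rfl fun m _ => by rw [hObs, hX0, hAct, Fin.coe_castSucc]
  rw [hmid, hlast]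
  ring

lemma snoc_apply_coord {t : ℕ} (ξ : StateTraj M t) (z : JointX M) (n : Fin M.N) :
    (fun s : Fin (t+2) => (Fin.snoc ξ z : Fin (t+2) → JointX M) s n)
      = Fin.snoc (fun s => ξ s n) (z n) := by
  funext s
  rcases s with ⟨i, hi⟩
  by_cases hlt : i < t + 1
  · rw [snoc_lt ξ z i hi hlt, snoc_lt (fun s => ξ s n) (z n) i hi hlt]
  · have : i = t + 1 := by omega
    subst this
    rw [snoc_top ξ z hi, snoc_top (fun s => ξ s n) (z n) hi]

lemma privHist_decomp (n : Fin M.N) (t : ℕ) (h' : PrivHist M n (t+1)) :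
    ∃ (h : PrivHist M n t) (x' : M.X n) (c' : M.C) (a : JointA M) (y : JointY M),
      h' = extendPriv M h x' c' a y := by
  refine ⟨(Fin.init h'.1, (Fin.init h'.2.1, Fin.init h'.2.2.1, Fin.init h'.2.2.2)),
    h'.1 (Fin.last (t+1)), h'.2.1 (Fin.last (t+1)), h'.2.2.1 (Fin.last t),
    h'.2.2.2 (Fin.last t), ?_⟩
  unfold extendPriv
  refine Prod.ext ?_ (Prod.ext ?_ (Prod.ext ?_ ?_)) <;>
    exact (Fin.snoc_init_self _).symm

lemma Ncan_snoc (lam : CIBStrat M) (ψ : CIBUpdate M) (g' : Strat M) (n : Fin M.N)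
    (hagree : ∀ m, m ≠ n → g' m = stratOf M lam ψ m) (t : ℕ) (h : PrivHist M n t)
    (x' : M.X n) (c' : M.C) (a : JointA M) (y : JointY M)
    (ξ : StateTraj M t) (z : JointX M) :
    Ncan M g' n (t+1) (extendPriv M h x' c' a y) (Fin.snoc ξ z) =
      Ncan M g' n t h ξ *
        ((if z n = x' then (1:ℝ) else 0) *
          (g' n t h (a n) * M.pC t c' (h.2.1 (Fin.last t)) a *
            ((∏ k, M.p t k (z k) (ξ (Fin.last t) k) a) *
              (∏ k, M.q t k (y k) (ξ (Fin.last t) k) a) *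
              ∏ k ∈ Finset.univ.erase n, stratOf M lam ψ k t (mkPriv M h.2 ξ k) (a k)))) := by
  have hind : ((fun s => (Fin.snoc ξ z : Fin (t+2) → JointX M) s n)
        = (extendPriv M h x' c' a y).1)
      ↔ ((fun s => ξ s n) = h.1 ∧ z n = x') := by
    rw [show (extendPriv M h x' c' a y).1 = Fin.snoc h.1 x' from rfl, snoc_apply_coord]
    exact snoc_eq_snoc_iff
  unfold Ncan
  by_cases h1 : (fun s => ξ s n) = h.1
  · by_cases h2 : z n = x'
    · rw [if_pos (hind.mpr ⟨h1, h2⟩), if_pos h1, if_pos h2]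
      have hfull : (((extendPriv M h x' c' a y).2.1, Fin.snoc ξ z,
            (extendPriv M h x' c' a y).2.2.1, (extendPriv M h x' c' a y).2.2.2)
              : FullTraj M (t+1))
          = extendFull M ((h.2.1, ξ, h.2.2.1, h.2.2.2) : FullTraj M t) a y c' z := rfl
      rw [hfull, trajProb_snoc]
      have hg : (∏ m, g' m t (currPriv M ((h.2.1, ξ, h.2.2.1, h.2.2.2) : FullTraj M t) m) (a m))
          = g' n t h (a n) *
              ∏ k ∈ Finset.univ.erase n, stratOf M lam ψ k t (mkPriv M h.2 ξ k) (a k) := by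
        rw [← Finset.mul_prod_erase Finset.univ
          (fun m => g' m t (currPriv M ((h.2.1, ξ, h.2.2.1, h.2.2.2) : FullTraj M t) m) (a m))
          (Finset.mem_univ n)]
        congr 1
        · have hcp : currPriv M ((h.2.1, ξ, h.2.2.1, h.2.2.2) : FullTraj M t) n = h := by
            unfold currPriv commonOf
            rw [show (fun s => ξ s n) = h.1 from h1]
          rw [hcp]
        · refine Finset.prod_congr rfl fun k hk => ?_
          rw [hagree k (Finset.mem_erase.1 hk).1]
          rfl
      rw [hg]
      ring
    · rw [if_neg (fun hc => h2 (hind.mp hc).2)]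
      simp [h2]
  · rw [if_neg (fun hc => h1 (hind.mp hc).1), if_neg h1]
    simp

lemma oneStep_nonneg (hM : M.Valid) (lam : CIBStrat M) (ψ : CIBUpdate M)
    (hlam : IsCIBStrat M lam) (μ : BeliefSys M) (hμb : IsBelief M μ)
    (n : Fin M.N) (t : ℕ) (h : PrivHist M n t) (ξ : StateTraj M t) (z : JointX M)
    (y : JointY M) (a : JointA M) :
    0 ≤ oneStep M (stratOf M lam ψ) μ n t h ξ z y a := by
  obtain ⟨-, -, -, -, -, -, h7, -, h9, -⟩ := hM
  refine mul_nonneg (mul_nonneg (mul_nonneg ((hμb n t h).1 ξ) ?_) ?_) ?_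
  · exact Finset.prod_nonneg fun k _ => h7 _ _ _ _ _
  · exact Finset.prod_nonneg fun k _ => h9 _ _ _ _ _
  · exact Finset.prod_nonneg fun k _ => (hlam k t _ _).1 _

lemma key_lemma (M : Model) (hM : M.Valid) (lam : CIBStrat M) (ψ : CIBUpdate M)
    (hlam : IsCIBStrat M lam) (μ : BeliefSys M)
    (hμ : Consistent M (stratOf M lam ψ) μ) (n : Fin M.N) (g' : Strat M)
    (hg' : IsStrat M g') (hagree : ∀ m, m ≠ n → g' m = stratOf M lam ψ m) :
    ∀ t (h : PrivHist M n t), 0 < (∑ ζ, Ncan M g' n t h ζ) →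
      ∀ ξ, Ncan M g' n t h ξ = μ n t h ξ * ∑ ζ, Ncan M g' n t h ζ := by
  intro t
  induction t with
  | zero =>
    intro h _ ξ
    have htraj0 : ∀ ζ : StateTraj M 0,
        trajProb M g' 0 ((h.2.1, ζ, h.2.2.1, h.2.2.2) : FullTraj M 0)
          = M.rhoC (h.2.1 ⟨0, Nat.succ_pos 0⟩) *
              ∏ k, M.rhoX k (ζ ⟨0, Nat.succ_pos 0⟩ k) := by
      intro ζ
      unfold trajProb
      simp
    have hcond : ∀ v : JointX M,
        ((fun _ : Fin 1 => v n) = h.1) ↔ (v n = h.1 ⟨0, Nat.succ_pos 0⟩) := by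
      intro v
      constructor
      · intro e; exact congrFun e ⟨0, Nat.succ_pos 0⟩
      · intro e; funext s
        rw [Subsingleton.elim s (⟨0, Nat.succ_pos 0⟩ : Fin 1)]; exact e
    have hreidx : ∀ F : StateTraj M 0 → ℝ,
        (∑ ζ : StateTraj M 0, F ζ) = ∑ v : JointX M, F (fun _ => v) := by
      intro F
      exact Fintype.sum_equiv (Equiv.funUnique (Fin 1) (JointX M)).symm
        (fun v => F (fun _ => v)) F (fun v => rfl) |>.symm
    have hS : (∑ ζ : StateTraj M 0, Ncan M g' n 0 h ζ)
        = M.rhoC (h.2.1 ⟨0, Nat.succ_pos 0⟩) * M.rhoX n (h.1 ⟨0, Nat.succ_pos 0⟩) := by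
      rw [hreidx]
      have : ∀ v : JointX M, Ncan M g' n 0 h (fun _ => v)
          = M.rhoC (h.2.1 ⟨0, Nat.succ_pos 0⟩) *
              (if v n = h.1 ⟨0, Nat.succ_pos 0⟩ then ∏ k, M.rhoX k (v k) else 0) := by
        intro v
        unfold Ncan
        rw [htraj0]
        by_cases hv : v n = h.1 ⟨0, Nat.succ_pos 0⟩
        · rw [if_pos ((hcond v).mpr hv), if_pos hv]
        · rw [if_neg (fun e => hv ((hcond v).mp e)), if_neg hv, mul_zero]
      rw [Finset.sum_congr rfl fun v _ => this v, ← Finset.mul_sum,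
        sum_pi_cond M.rhoX n (h.1 ⟨0, Nat.succ_pos 0⟩)]
      have h1 : (∏ k ∈ Finset.univ.erase n, ∑ x, M.rhoX k x) = 1 := by
        rw [Finset.prod_congr rfl fun k _ => hM.2.2.2.1 k]
        exact Finset.prod_const_one
      rw [h1, mul_one]
    rw [hμ.2.1 n h ξ, hS]
    unfold Ncan
    by_cases hi : (fun s => ξ s n) = h.1
    · rw [if_pos hi, if_pos hi, htraj0, one_mul]
      have hx0 : ξ ⟨0, Nat.succ_pos 0⟩ n = h.1 ⟨0, Nat.succ_pos 0⟩ :=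
        congrFun hi ⟨0, Nat.succ_pos 0⟩
      have hlast0 : (Fin.last 0) = (⟨0, Nat.succ_pos 0⟩ : Fin 1) := rfl
      rw [hlast0, ← Finset.mul_prod_erase Finset.univ (fun k => M.rhoX k (ξ ⟨0, Nat.succ_pos 0⟩ k))
        (Finset.mem_univ n), hx0]
      ring
    · rw [if_neg hi, if_neg hi]
      simp
  | succ t ih =>
    intro h' hS'
    obtain ⟨h, x', c', a, y, rfl⟩ := privHist_decomp n t h'
    have hexp := fun (ξ : StateTraj M t) (z : JointX M) =>
      Ncan_snoc lam ψ g' n hagree t h x' c' a y ξ z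
    have hsum : (∑ ζ : StateTraj M (t+1), Ncan M g' n (t+1) (extendPriv M h x' c' a y) ζ)
        = ∑ ξ : StateTraj M t, ∑ z : JointX M,
            Ncan M g' n (t+1) (extendPriv M h x' c' a y) (Fin.snoc ξ z) :=
      sum_snoc_fn _
    have hSpos : 0 < ∑ ζ, Ncan M g' n t h ζ := by
      by_contra hc
      have h0 : (∑ ζ, Ncan M g' n t h ζ) = 0 :=
        le_antisymm (not_lt.1 hc)
          (Finset.sum_nonneg fun ζ _ => Ncan_nonneg hM g' hg' n t h ζ)
      have hz : ∀ ζ, Ncan M g' n t h ζ = 0 := fun ζ =>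
        (Finset.sum_eq_zero_iff_of_nonneg
          (fun ζ _ => Ncan_nonneg hM g' hg' n t h ζ)).1 h0 ζ (Finset.mem_univ ζ)
      rw [hsum] at hS'
      have hzz : ∀ ξ z, Ncan M g' n (t+1) (extendPriv M h x' c' a y) (Fin.snoc ξ z) = 0 := by
        intro ξ z; rw [hexp ξ z, hz ξ, zero_mul]
      simp only [hzz, Finset.sum_const_zero] at hS'
      exact lt_irrefl 0 hS'
    have hIH := ih h hSpos
    have hSform : (∑ ζ, Ncan M g' n (t+1) (extendPriv M h x' c' a y) ζ)
        = (g' n t h (a n) * M.pC t c' (h.2.1 (Fin.last t)) a) *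
            ((∑ ζ, Ncan M g' n t h ζ) *
              newStateProb M (stratOf M lam ψ) μ n t h x' y a) := by
      rw [hsum]
      have hterm : ∀ (ξ : StateTraj M t) (z : JointX M),
          Ncan M g' n (t+1) (extendPriv M h x' c' a y) (Fin.snoc ξ z)
            = (g' n t h (a n) * M.pC t c' (h.2.1 (Fin.last t)) a) *
                ((∑ ζ, Ncan M g' n t h ζ) *
                  (if z n = x'
                    then oneStep M (stratOf M lam ψ) μ n t h ξ z y a else 0)) := by
        intro ξ z
        rw [hexp ξ z, hIH ξ]
        unfold oneStep
        by_cases hz : z n = x' <;> simp only [hz, if_true, if_false] <;> ring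
      rw [Finset.sum_congr rfl fun ξ _ => Finset.sum_congr rfl fun z _ => hterm ξ z]
      simp only [← Finset.mul_sum]
      rfl
    have hNSPnn : 0 ≤ newStateProb M (stratOf M lam ψ) μ n t h x' y a := by
      refine Finset.sum_nonneg fun ξ _ => Finset.sum_nonneg fun z _ => ?_
      split
      · exact oneStep_nonneg hM lam ψ hlam μ hμ.1 n t h ξ z y a
      · exact le_refl 0
    have hNSPpos : 0 < newStateProb M (stratOf M lam ψ) μ n t h x' y a := by
      rcases lt_or_eq_of_le hNSPnn with hlt | heq
      · exact hlt
      · exfalso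
        rw [hSform, ← heq, mul_zero, mul_zero] at hS'
        exact lt_irrefl 0 hS'
    have hBayes := (hμ.2.2 n t h x' c' a y).1 hNSPpos
    intro ζ
    have hζ : Fin.snoc (Fin.init ζ) (ζ (Fin.last (t+1))) = ζ := Fin.snoc_init_self ζ
    have L := hexp (Fin.init ζ) (ζ (Fin.last (t+1)))
    rw [hζ] at L
    have hμ' : μ n (t+1) (extendPriv M h x' c' a y) ζ
        = (if ζ (Fin.last (t+1)) n = x' then (1:ℝ) else 0) *
            ((μ n t h (Fin.init ζ) *
              (∏ k, M.p t k (ζ (Fin.last (t+1)) k) ((Fin.init ζ) (Fin.last t) k) a) *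
              (∏ k, M.q t k (y k) ((Fin.init ζ) (Fin.last t) k) a) *
              ∏ k ∈ Finset.univ.erase n,
                stratOf M lam ψ k t (mkPriv M h.2 (Fin.init ζ) k) (a k)) /
              newStateProb M (stratOf M lam ψ) μ n t h x' y a) := hBayes ζ
    rw [L, hμ', hSform, hIH (Fin.init ζ)]
    have hNSPne : newStateProb M (stratOf M lam ψ) μ n t h x' y a ≠ 0 :=
      ne_of_gt hNSPpos
    by_cases hz : ζ (Fin.last (t+1)) n = x'
    · simp only [hz, if_true]
      field_simp
    · simp only [hz, if_false]
      ring

end Stmt4Aux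

/-- Lemma 3, conditional independence: let `(g, μ) = f(λ, ψ)` be the
behavioral strategy profile and consistent product-form belief system induced by a CIB
strategy profile `λ` and a consistent CIB update rule `ψ`.  If every agent `k ≠ n` uses
`gᵏ`, then for any behavioral strategy `g'ⁿ` of agent `n` and any history `hⁿ_t` of
positive probability, the conditional distribution of the state trajectories equals
`μⁿ_t(hⁿ_t)`, which has the product form
`1{xⁿ_{1:t} matches hⁿ_t}·∏_{k≠n} μ^c_t(h^c_t)(x^k_{1:t})`; in particular agent `n`'s
belief about the other agents' local-state trajectories depends only on the common
history and not on his own strategy. -/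
theorem stmt_4 (M : Model) (hM : M.Valid)
    (lam : CIBStrat M) (ψ : CIBUpdate M)
    (hlam : IsCIBStrat M lam) (hψ : IsCIBUpdate M ψ)
    (hcons : UpdateConsistent M ψ lam)
    (μ : BeliefSys M) (μc : ∀ t : ℕ, CommonHist M t → StateTraj M t → ℝ)
    (hμc : ∀ t h, (∀ ξ, 0 ≤ μc t h ξ) ∧ (∑ ξ, μc t h ξ) = 1)
    (hμ : Consistent M (stratOf M lam ψ) μ)
    (hprod : ProductForm M μ μc)
    (hmarg : MarginalMatch M ψ μc)
    (n : Fin M.N) (g' : Strat M) (hg' : IsStrat M g')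
    (hagree : ∀ m, m ≠ n → g' m = stratOf M lam ψ m)
    (t : ℕ) (h : PrivHist M n t) (hpos : 0 < privHistProb M g' n t h)
    (ξ : StateTraj M t) :
    condStateProb M g' n t h ξ = μ n t h ξ ∧
    condStateProb M g' n t h ξ =
      (if (fun s => ξ s n) = h.1 then (1:ℝ) else 0) *
        ∏ k ∈ Finset.univ.erase n, margTraj M (μc t h.2) k (fun s => ξ s k) := by
  have hpos' : 0 < ∑ ζ, Ncan M g' n t h ζ := by rwa [privHistProb_eq] at hpos
  have hkey := key_lemma M hM lam ψ hlam μ hμ n g' hg' hagree t h hpos'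
  have hSne : (∑ ζ, Ncan M g' n t h ζ) ≠ 0 := ne_of_gt hpos'
  have h1 : condStateProb M g' n t h ξ = μ n t h ξ := by
    unfold condStateProb
    rw [privHistProb_eq, numer_eq, hkey ξ, mul_div_assoc, div_self hSne, mul_one]
  exact ⟨h1, h1.trans (hprod n t h ξ)⟩

end CIBGame
end
end
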